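/- arXiv:1803.01359 — 7 statements merged into one kernel-verified Lean document; each statement's English description precedes it below -/
import Mathlib

section
/- For every ν > 0, every a ≥ 0, every integer k with k ≠ 0, all real numbers η and l, and every t ≥ 0, one has exp(−ν (2π)² ∫₀^t (k² + (η − k τ)² + l²) dτ) ≤ exp((2/(3π)) a^{3/2}) · exp(−a ν^{1/3} t). (Enhanced dissipation estimate for the heat semigroup in sheared coordinates at a nonzero x-frequency.) -/
/-!
Completing the square, `∫₀^t (η - kτ)² dτ = t (η - kt/2)² + k² t³/12 ≥ t³/12`, so the left-hand
side is at most `exp(-π² ν t³ / 3)`. Young's inequality with exponents `3/2` and `3` then gives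
`a ν^{1/3} t ≤ 2/(3π) a^{3/2} + π² ν t³ / 3`.
-/

open Real intervalIntegral

theorem integral_sq_sub_mul (η c t : ℝ) :
    ∫ τ in (0:ℝ)..t, (η - c * τ) ^ 2 = t * (η - c * t / 2) ^ 2 + c ^ 2 * t ^ 3 / 12 := by
  have hderiv : ∀ τ ∈ Set.uIcc 0 t,
      HasDerivAt (fun τ => η ^ 2 * τ - η * c * τ ^ 2 + c ^ 2 * τ ^ 3 / 3) ((η - c * τ) ^ 2) τ := by
    intro τ _
    refine ((((hasDerivAt_id τ).const_mul (η ^ 2)).sub ((hasDerivAt_pow 2 τ).const_mul (η * c))).add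
      (((hasDerivAt_pow 3 τ).const_mul (c ^ 2)).div_const 3)).congr_deriv ?_
    push_cast; ring
  rw [integral_eq_sub_of_hasDerivAt hderiv ((by fun_prop : Continuous _).intervalIntegrable _ _)]
  ring

theorem sq_mul_cube_div_twelve_le_integral (c η l t : ℝ) (ht : 0 ≤ t) :
    c ^ 2 * t ^ 3 / 12 ≤ ∫ τ in (0:ℝ)..t, (c ^ 2 + (η - c * τ) ^ 2 + l ^ 2) :=
  calc c ^ 2 * t ^ 3 / 12 ≤ ∫ τ in (0:ℝ)..t, (η - c * τ) ^ 2 := by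
        rw [integral_sq_sub_mul]; nlinarith [mul_nonneg ht (sq_nonneg (η - c * t / 2))]
    _ ≤ _ := integral_mono_on ht ((by fun_prop : Continuous _).intervalIntegrable _ _)
        ((by fun_prop : Continuous _).intervalIntegrable _ _)
        fun τ _ => by nlinarith [sq_nonneg l, sq_nonneg c]

-- `2 b³ + s³ - 3 b² s = (s - b)² (s + 2 b)`
theorem three_mul_sq_mul_le {b s : ℝ} (hb : 0 ≤ b) (hs : 0 ≤ s) :
    3 * b ^ 2 * s ≤ 2 * b ^ 3 + s ^ 3 := by
  nlinarith [mul_nonneg (sq_nonneg (s - b)) (add_nonneg hs (mul_nonneg zero_le_two hb))]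

theorem mul_le_rpow_three_halves_add {a x c : ℝ} (ha : 0 ≤ a) (hx : 0 ≤ x) (hc : 0 < c) :
    a * x ≤ 2 / (3 * c) * a ^ ((3:ℝ) / 2) + c ^ 2 / 3 * x ^ 3 := by
  have hyoung := three_mul_sq_mul_le (sqrt_nonneg a) (mul_nonneg hc.le hx)
  have hcube : √a ^ 3 = a ^ ((3:ℝ) / 2) := by
    rw [sqrt_eq_rpow, ← rpow_natCast, ← rpow_mul ha]; norm_num
  rw [sq_sqrt ha, hcube] at hyoung
  rw [div_mul_eq_mul_div, div_mul_eq_mul_div, div_add_div _ _ (by positivity) (by norm_num),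
    le_div_iff₀ (by positivity)]
  nlinarith

/-- Enhanced dissipation estimate for the heat semigroup in sheared coordinates at a
nonzero x-frequency: for every `ν > 0`, `a ≥ 0`, every nonzero integer `k`,
all real `η`, `l` and every `t ≥ 0`,
`exp(−ν (2π)² ∫₀^t (k² + (η − k τ)² + l²) dτ) ≤ exp((2/(3π)) a^{3/2}) · exp(−a ν^{1/3} t)`. -/
theorem stmt1 (ν a : ℝ) (hν : 0 < ν) (ha : 0 ≤ a) (k : ℤ) (hk : k ≠ 0) (η l t : ℝ)
    (ht : 0 ≤ t) :
    Real.exp (-(ν * (2 * Real.pi) ^ 2 *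
        ∫ τ in (0:ℝ)..t, ((k : ℝ) ^ 2 + (η - (k : ℝ) * τ) ^ 2 + l ^ 2)))
      ≤ Real.exp ((2 / (3 * Real.pi)) * a ^ ((3:ℝ)/2)) *
        Real.exp (-(a * ν ^ ((1:ℝ)/3) * t)) := by
  rw [← exp_add, exp_le_exp]
  have hk2 : (1:ℝ) ≤ (k:ℝ) ^ 2 := by
    rw [one_le_sq_iff_one_le_abs]; exact_mod_cast Int.one_le_abs hk
  have hintegral : t ^ 3 / 12 ≤ ∫ τ in (0:ℝ)..t, ((k : ℝ) ^ 2 + (η - (k : ℝ) * τ) ^ 2 + l ^ 2) :=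
    le_trans (by nlinarith [pow_nonneg ht 3]) (sq_mul_cube_div_twelve_le_integral k η l t ht)
  have hdissipation := mul_le_mul_of_nonneg_left hintegral
    (by positivity : 0 ≤ ν * (2 * π) ^ 2)
  have hyoung := mul_le_rpow_three_halves_add ha
    (mul_nonneg (rpow_nonneg hν.le ((1:ℝ) / 3)) ht) pi_pos
  have hcube : (ν ^ ((1:ℝ) / 3) * t) ^ 3 = ν * t ^ 3 := by
    rw [mul_pow, ← rpow_natCast, ← rpow_mul hν.le]; norm_num
  rw [hcube] at hyoung
  linarith
end

section
/- There exists a constant C > 0 such that for every ν > 0, every a ∈ [0,4], every integer k with k ≠ 0, all real numbers η and l, and every t ≥ 1, one has exp(−ν ∫₁^t (2π)² (k² + (η − k s)² + l²) ds) ≤ C · exp(−(a+1) ν^{1/3} (t − 1)). -/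
/-!
The integrand dominates `(2π)² (η - k s)²`, whose integral over `[1, t]` is at least
`(2π)² k² (t - 1)³ / 12 ≥ 3 (t - 1)³` whatever `η` is, since `k² ≥ 1`. With `x = ν^{1/3} (t - 1)`
the left side is therefore at most `exp (-3 x³)`, and a cubic beats the linear rate
`(a + 1) x ≤ 5 x` up to the additive constant `10`.
-/

open Real

/-- Variance decomposition of the square of an affine function over an interval. -/
theorem integral_sq_sub_mul_eq (η k a b : ℝ) :
    ∫ s in a..b, (η - k * s) ^ 2
      = (b - a) * (η - k * (a + b) / 2) ^ 2 + k ^ 2 * (b - a) ^ 3 / 12 := by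
  have hderiv : ∀ s ∈ Set.uIcc a b,
      HasDerivAt (fun s => η ^ 2 * s - η * k * s ^ 2 + k ^ 2 * s ^ 3 / 3) ((η - k * s) ^ 2) s := by
    intro s _
    refine ((((hasDerivAt_id' s).const_mul (η ^ 2)).sub
      ((hasDerivAt_pow 2 s).const_mul (η * k))).add
      (((hasDerivAt_pow 3 s).const_mul (k ^ 2)).div_const 3)).congr_deriv ?_
    push_cast
    ring
  rw [intervalIntegral.integral_eq_sub_of_hasDerivAt hderiv
    (Continuous.intervalIntegrable (by fun_prop) a b)]
  ring

theorem three_mul_cube_le_integral {k : ℝ} (hk : 1 ≤ k ^ 2) (η l : ℝ) {a b : ℝ} (hab : a ≤ b) :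
    3 * (b - a) ^ 3 ≤ ∫ s in a..b, (2 * π) ^ 2 * (k ^ 2 + (η - k * s) ^ 2 + l ^ 2) := by
  have hmono : ∫ s in a..b, (2 * π) ^ 2 * (η - k * s) ^ 2
      ≤ ∫ s in a..b, (2 * π) ^ 2 * (k ^ 2 + (η - k * s) ^ 2 + l ^ 2) :=
    intervalIntegral.integral_mono_on hab (Continuous.intervalIntegrable (by fun_prop) a b)
      (Continuous.intervalIntegrable (by fun_prop) a b) fun s _ => by
      gcongr
      nlinarith [sq_nonneg k, sq_nonneg l]
  rw [intervalIntegral.integral_const_mul] at hmono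
  have hsq : k ^ 2 * (b - a) ^ 3 / 12 ≤ ∫ s in a..b, (η - k * s) ^ 2 := by
    rw [integral_sq_sub_mul_eq]
    nlinarith [mul_nonneg (sub_nonneg.2 hab) (sq_nonneg (η - k * (a + b) / 2))]
  have hcube : 0 ≤ (b - a) ^ 3 := pow_nonneg (by linarith) 3
  have hpi : 9 ≤ π ^ 2 := by nlinarith [pi_gt_three]
  nlinarith [mul_le_mul_of_nonneg_left hsq (sq_nonneg (2 * π)), mul_nonneg hcube (sub_nonneg.2 hk)]

theorem five_mul_le_three_mul_cube_add_ten {x : ℝ} (hx : 0 ≤ x) : 5 * x ≤ 3 * x ^ 3 + 10 := by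
  nlinarith [mul_nonneg hx (sq_nonneg (x - 1)), sq_nonneg (x - 1)]

theorem one_le_intCast_sq {k : ℤ} (hk : k ≠ 0) : (1 : ℝ) ≤ (k : ℝ) ^ 2 := by
  rw [one_le_sq_iff_one_le_abs, ← Int.cast_abs]
  exact_mod_cast Int.one_le_abs hk

/-- There is a constant `C > 0` such that for every `ν > 0`, `a ∈ [0,4]`, every nonzero
integer `k`, all real `η`, `l`, and every `t ≥ 1`:
`exp(−ν ∫₁^t (2π)² (k² + (η − k s)² + l²) ds) ≤ C · exp(−(a+1) ν^{1/3} (t − 1))`. -/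
theorem stmt4 : ∃ C : ℝ, 0 < C ∧ ∀ (ν a : ℝ) (k : ℤ) (l η t : ℝ),
    0 < ν → 0 ≤ a → a ≤ 4 → k ≠ 0 → 1 ≤ t →
    Real.exp (-(ν * ∫ s in (1:ℝ)..t,
        (2 * Real.pi) ^ 2 * ((k : ℝ) ^ 2 + (η - (k : ℝ) * s) ^ 2 + l ^ 2)))
      ≤ C * Real.exp (-((a + 1) * ν ^ ((1:ℝ)/3) * (t - 1))) := by
  refine ⟨exp 10, exp_pos 10, fun ν a k l η t hν _ ha4 hk ht => ?_⟩
  have hJ := three_mul_cube_le_integral (one_le_intCast_sq hk) η l ht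
  have hx : 0 ≤ ν ^ ((1:ℝ)/3) * (t - 1) := mul_nonneg (by positivity) (by linarith)
  have hcube : (ν ^ ((1:ℝ)/3) * (t - 1)) ^ 3 = ν * (t - 1) ^ 3 := by
    rw [mul_pow, ← rpow_natCast, ← rpow_mul hν.le]
    norm_num
  rw [← exp_add, exp_le_exp]
  nlinarith [five_mul_le_three_mul_cube_add_ten hx, mul_le_mul_of_nonneg_left hJ hν.le,
    mul_le_mul_of_nonneg_right ha4 hx]
end

section
/- There exists a constant C > 0 with the following property. Define F₁(t) = ∫₁^t exp(−ν(γ₁(t) − γ₁(s))) · 2π i k · f₁(s) ds for t ∈ [1,T], where f₁ : [1,T] → ℂ is continuous. Then sup_{t ∈ [1,T]} e^{a ν^{1/3} t} |F₁(t)| ≤ C |k|^{1/2} (k² + l²)^{−1/4} · (∫₁^T e^{2 a ν^{1/3} s} γ(s) |f₁(s)|² ds)^{1/2}, and ∫₁^T e^{2 a ν^{1/3} t} |F₁(t)|² dt ≤ C ν^{−1/3} |k| (k² + l²)^{−1/2} · ∫₁^T e^{2 a ν^{1/3} s} γ(s) |f₁(s)|² ds. The constant C is independent of ν, T, a, k,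 l, η, f₁. -/
/-!
Along the shear, `γ₁(t) - γ₁(s) ≥ 3 (t - s)³`. Writing `c = ν^{1/3}`, this lets the weight
`e^{a c t}` pass through the kernel `e^{-ν(γ₁(t) - γ₁(s))}` at the cost of a factor `e⁴`, leaving
the kernel `e^{-ν(t - s)³}`. Cauchy–Schwarz against the weight `γ`, with
`∫ γ⁻¹ ≤ 1 / (4π |k| √(k² + l²))` (an arctangent), gives the pointwise bound. For the `L²` bound,
`e^{-ν(t - s)³} ≤ e · e^{-c(t - s)}`, and integrating the convolution with `e^{-c t}` costs a
factor `c⁻¹`.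
-/

open MeasureTheory intervalIntegral Real Set

lemma integral_mono_on_of_nonneg {f g : ℝ → ℝ} {a b : ℝ} (hab : a ≤ b)
    (hf : ∀ x ∈ Icc a b, 0 ≤ f x) (h : ∀ x ∈ Icc a b, f x ≤ g x)
    (hg : IntervalIntegrable g volume a b) :
    ∫ x in a..b, f x ≤ ∫ x in a..b, g x := by
  rw [integral_of_le hab, integral_of_le hab]
  exact setIntegral_mono_of_nonneg (fun x hx => hf x (Ioc_subset_Icc_self hx))
    (fun x hx => h x (Ioc_subset_Icc_self hx)) hg.1

lemma sq_integral_mul_le_integral_div_mul_integral {w γ g : ℝ → ℝ} {a b : ℝ} (hab : a ≤ b)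
    (hw : ∀ s, 0 ≤ w s) (hγ : ∀ s, 0 < γ s)
    (h₁ : IntervalIntegrable (fun s => w s / γ s) volume a b)
    (h₂ : IntervalIntegrable (fun s => w s * g s) volume a b)
    (h₃ : IntervalIntegrable (fun s => w s * γ s * g s ^ 2) volume a b) :
    (∫ s in a..b, w s * g s) ^ 2 ≤
      (∫ s in a..b, w s / γ s) * ∫ s in a..b, w s * γ s * g s ^ 2 := by
  -- `∫ (w / γ) (x + γ g)² ≥ 0` is a quadratic in `x`, so its discriminant is `≤ 0`
  have hquad : ∀ x : ℝ, 0 ≤ (∫ s in a..b, w s / γ s) * (x * x) +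
      (2 * ∫ s in a..b, w s * g s) * x + ∫ s in a..b, w s * γ s * g s ^ 2 := by
    intro x
    have hexpand : ∀ s, w s / γ s * (x + γ s * g s) ^ 2 =
        x * x * (w s / γ s) + 2 * x * (w s * g s) + w s * γ s * g s ^ 2 := fun s => by
      field_simp [(hγ s).ne']
      ring
    calc 0 ≤ ∫ s in a..b, w s / γ s * (x + γ s * g s) ^ 2 :=
          integral_nonneg hab fun s _ => mul_nonneg (div_nonneg (hw s) (hγ s).le) (sq_nonneg _)
      _ = _ := by
          simp_rw [hexpand]
          rw [integral_add ((h₁.const_mul _).add (h₂.const_mul _)) h₃,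
            integral_add (h₁.const_mul _) (h₂.const_mul _), intervalIntegral.integral_const_mul,
            intervalIntegral.integral_const_mul]
          ring
  have hdiscr := discrim_le_zero hquad
  rw [discrim] at hdiscr
  nlinarith

lemma integral_inv_sq_add_sub_mul_sq_le {b k : ℝ} (hb : 0 < b) (hk : k ≠ 0) (η s t : ℝ) :
    ∫ τ in s..t, (b ^ 2 + (η - k * τ) ^ 2)⁻¹ ≤ π / (|k| * b) := by
  rw [integral_comp_sub_mul (fun x => (b ^ 2 + x ^ 2)⁻¹) hk, integral_inv_sq_add_sq hb.ne',
    smul_eq_mul, ← mul_assoc, ← mul_inv]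
  have hπ : |arctan ((η - k * s) / b) - arctan ((η - k * t) / b)| ≤ π := by
    obtain ⟨hx₁, hx₂⟩ := arctan_mem_Ioo ((η - k * s) / b)
    obtain ⟨hy₁, hy₂⟩ := arctan_mem_Ioo ((η - k * t) / b)
    exact abs_sub_le_iff.2 ⟨by linarith, by linarith⟩
  calc _ ≤ |(k * b)⁻¹ * (arctan ((η - k * s) / b) - arctan ((η - k * t) / b))| := le_abs_self _
    _ = (|k| * b)⁻¹ * |arctan ((η - k * s) / b) - arctan ((η - k * t) / b)| := by
        rw [abs_mul, abs_inv, abs_mul, abs_of_pos hb]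
    _ ≤ (|k| * b)⁻¹ * π := by gcongr
    _ = π / (|k| * b) := by rw [div_eq_inv_mul]

lemma sq_mul_cube_div_twelve_le_integral_sq (k η : ℝ) {s t : ℝ} (hst : s ≤ t) :
    k ^ 2 * (t - s) ^ 3 / 12 ≤ ∫ τ in s..t, (η - k * τ) ^ 2 := by
  rcases eq_or_ne k 0 with rfl | hk
  · simpa using mul_nonneg (sub_nonneg.2 hst) (sq_nonneg η)
  rw [integral_comp_sub_mul (fun x => x ^ 2) hk, integral_pow, smul_eq_mul]
  have hmid : k⁻¹ * (((η - k * s) ^ (2 + 1) - (η - k * t) ^ (2 + 1)) / ((2 : ℕ) + 1)) =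
      (t - s) * ((η - k * (s + t) / 2) ^ 2 + k ^ 2 * (t - s) ^ 2 / 12) := by
    field_simp
    ring
  rw [hmid]
  nlinarith [mul_nonneg (sub_nonneg.2 hst) (sq_nonneg (η - k * (s + t) / 2))]

lemma integral_exp_neg_mul_integral_exp_mul_le {c : ℝ} (hc : 0 < c) {q : ℝ → ℝ}
    (hq : Continuous q) (hq0 : ∀ s, 0 ≤ q s) {t₀ T : ℝ} (hT : t₀ ≤ T) :
    ∫ t in t₀..T, exp (-(c * t)) * ∫ s in t₀..t, exp (c * s) * q s ≤
      c⁻¹ * ∫ t in t₀..T, q t := by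
  -- `R` solves `R' = q - c R` with `R t₀ = 0` and `R ≥ 0`; integrate this over `[t₀, T]`
  set R : ℝ → ℝ := fun t => exp (-(c * t)) * ∫ s in t₀..t, exp (c * s) * q s
  have hR : ∀ t, HasDerivAt R (q t - c * R t) t := by
    intro t
    have hexp : HasDerivAt (fun t => exp (-(c * t))) (exp (-(c * t)) * -c) t := by
      simpa using ((hasDerivAt_id t).const_mul c).neg.exp
    have hprim := ((by fun_prop : Continuous fun s => exp (c * s) * q s).integral_hasStrictDerivAt
      t₀ t).hasDerivAt
    refine (hexp.mul hprim).congr_deriv ?_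
    rw [← mul_assoc, ← exp_add, neg_add_cancel, exp_zero, one_mul]
    ring
  have hRc : Continuous R := continuous_iff_continuousAt.2 fun t => (hR t).continuousAt
  have hFTC := integral_eq_sub_of_hasDerivAt (fun t _ => hR t)
    ((hq.sub (continuous_const.mul hRc)).intervalIntegrable t₀ T)
  rw [integral_sub (f := q) (g := fun t => c * R t) (hq.intervalIntegrable _ _)
    ((continuous_const.mul hRc).intervalIntegrable _ _),
    intervalIntegral.integral_const_mul] at hFTC
  have hRT : 0 ≤ R T := mul_nonneg (exp_nonneg _)
    (integral_nonneg hT fun s _ => mul_nonneg (exp_nonneg _) (hq0 s))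
  have hR₀ : R t₀ = 0 := by simp [R]
  rw [le_inv_mul_iff₀ hc]
  linarith

section Kernel

variable {ν c : ℝ}

lemma exp_neg_mul_cube_le_one (hν : 0 ≤ ν) {u : ℝ} (hu : 0 ≤ u) : exp (-(ν * u ^ 3)) ≤ 1 :=
  exp_le_one_iff.2 (neg_nonpos.2 (by positivity))

lemma exp_neg_mul_cube_le (hc : 0 ≤ c) (hcν : c ^ 3 = ν) {u : ℝ} (hu : 0 ≤ u) :
    exp (-(ν * u ^ 3)) ≤ exp 1 * exp (-(c * u)) := by
  rw [← exp_add, exp_le_exp, ← hcν, ← mul_pow]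
  have hx : 0 ≤ c * u := mul_nonneg hc hu
  nlinarith [mul_nonneg hx (sq_nonneg (c * u - 1)), sq_nonneg (c * u - 1 / 2)]

lemma exp_neg_mul_le_of_cube_le {a : ℝ} (hc : 0 ≤ c) (hcν : c ^ 3 = ν) (ha : a ≤ 4) {u G : ℝ}
    (hu : 0 ≤ u) (hG : 3 * u ^ 3 ≤ G) :
    exp (-(ν * G)) ≤ exp 4 * exp (-(ν * u ^ 3)) * exp (-(a * c * u)) := by
  rw [← exp_add, ← exp_add, exp_le_exp]
  -- with `x = c u`: `a x - 3 x³ ≤ 4 x - 3 x³ ≤ 4 - x³`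
  have hx : 0 ≤ c * u := mul_nonneg hc hu
  have hνG : 3 * (c * u) ^ 3 ≤ ν * G := by
    rw [mul_pow, hcν]; nlinarith [pow_nonneg hc 3]
  have hνu : ν * u ^ 3 = (c * u) ^ 3 := by rw [mul_pow, hcν]
  nlinarith [mul_le_mul_of_nonneg_right ha hx, mul_nonneg hx (sq_nonneg (c * u - 1)),
    sq_nonneg (c * u - 3 / 4)]

end Kernel

section Duhamel

variable {ν c a t₀ : ℝ} {γ₁ : ℝ → ℝ}

lemma exp_mul_norm_integral_le (hc : 0 ≤ c) (hcν : c ^ 3 = ν) (ha : a ≤ 4)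
    (hgap : ∀ s t, s ≤ t → 3 * (t - s) ^ 3 ≤ γ₁ t - γ₁ s) (κ : ℂ) {f : ℝ → ℂ}
    (hf : Continuous f) {t : ℝ} (ht : t₀ ≤ t) :
    exp (a * c * t) * ‖∫ s in t₀..t, (exp (-(ν * (γ₁ t - γ₁ s))) : ℂ) * κ * f s‖ ≤
      ‖κ‖ * exp 4 * ∫ s in t₀..t, exp (-(ν * (t - s) ^ 3)) * (exp (a * c * s) * ‖f s‖) := by
  have hbound : ∀ s ∈ Icc t₀ t, ‖(exp (-(ν * (γ₁ t - γ₁ s))) : ℂ) * κ * f s‖ ≤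
      exp (-(a * c * t)) * (‖κ‖ * exp 4) *
        (exp (-(ν * (t - s) ^ 3)) * (exp (a * c * s) * ‖f s‖)) := by
    intro s hs
    have hker := exp_neg_mul_le_of_cube_le hc hcν ha (sub_nonneg.2 hs.2) (hgap s t hs.2)
    rw [show -(a * c * (t - s)) = -(a * c * t) + a * c * s by ring, exp_add] at hker
    rw [norm_mul, norm_mul, Complex.norm_real, norm_of_nonneg (exp_nonneg _)]
    calc _ ≤ exp 4 * exp (-(ν * (t - s) ^ 3)) * (exp (-(a * c * t)) * exp (a * c * s)) *
          ‖κ‖ * ‖f s‖ := by gcongr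
      _ = _ := by ring
  have hnorm := norm_integral_le_of_norm_le (μ := volume) ht
    (ae_of_all _ fun s hs => hbound s (Ioc_subset_Icc_self hs))
    ((by fun_prop : Continuous fun s => exp (-(a * c * t)) * (‖κ‖ * exp 4) *
        (exp (-(ν * (t - s) ^ 3)) * (exp (a * c * s) * ‖f s‖))).intervalIntegrable t₀ t)
  rw [intervalIntegral.integral_const_mul] at hnorm
  calc _ ≤ exp (a * c * t) * (exp (-(a * c * t)) * (‖κ‖ * exp 4) *
        ∫ s in t₀..t, exp (-(ν * (t - s) ^ 3)) * (exp (a * c * s) * ‖f s‖)) := by gcongr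
    _ = _ := by rw [← mul_assoc, ← mul_assoc, ← exp_add, add_neg_cancel, exp_zero, one_mul]

lemma sq_integral_exp_neg_mul_cube_mul_le (hν : 0 ≤ ν) {γ g : ℝ → ℝ} (hγ : Continuous γ)
    (hγpos : ∀ s, 0 < γ s) (hg : Continuous g) {I t : ℝ} (ht : t₀ ≤ t)
    (hI : ∫ s in t₀..t, (γ s)⁻¹ ≤ I) :
    (∫ s in t₀..t, exp (-(ν * (t - s) ^ 3)) * g s) ^ 2 ≤
      I * ∫ s in t₀..t, exp (-(ν * (t - s) ^ 3)) * γ s * g s ^ 2 := by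
  have hγ' : ∀ s, γ s ≠ 0 := fun s => (hγpos s).ne'
  have hdiv : Continuous fun s => exp (-(ν * (t - s) ^ 3)) / γ s := by
    fun_prop (disch := exact hγ')
  refine (sq_integral_mul_le_integral_div_mul_integral ht (fun _ => exp_nonneg _) hγpos
    (hdiv.intervalIntegrable _ _) ((by fun_prop : Continuous _).intervalIntegrable _ _)
    ((by fun_prop : Continuous _).intervalIntegrable _ _)).trans ?_
  refine mul_le_mul_of_nonneg_right ?_
    (integral_nonneg ht fun s _ => by have := (hγpos s).le; positivity)
  refine le_trans (integral_mono_on ht (hdiv.intervalIntegrable _ _)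
    ((hγ.inv₀ hγ').intervalIntegrable _ _) fun s hs => ?_) hI
  rw [div_eq_mul_inv]
  exact mul_le_of_le_one_left (inv_nonneg.2 (hγpos s).le)
    (exp_neg_mul_cube_le_one hν (sub_nonneg.2 hs.2))

lemma integral_exp_neg_mul_cube_mul_le (hc : 0 ≤ c) (hcν : c ^ 3 = ν) {q : ℝ → ℝ}
    (hq : Continuous q) (hq0 : ∀ s, 0 ≤ q s) {t : ℝ} (ht : t₀ ≤ t) :
    ∫ s in t₀..t, exp (-(ν * (t - s) ^ 3)) * q s ≤
      exp 1 * (exp (-(c * t)) * ∫ s in t₀..t, exp (c * s) * q s) := by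
  rw [← intervalIntegral.integral_const_mul, ← intervalIntegral.integral_const_mul]
  refine integral_mono_on ht ((by fun_prop : Continuous _).intervalIntegrable _ _)
    ((by fun_prop : Continuous _).intervalIntegrable _ _) fun s hs => ?_
  calc _ ≤ exp 1 * exp (-(c * (t - s))) * q s :=
        mul_le_mul_of_nonneg_right (exp_neg_mul_cube_le hc hcν (sub_nonneg.2 hs.2)) (hq0 s)
    _ = _ := by rw [show -(c * (t - s)) = -(c * t) + c * s by ring, exp_add]; ring

lemma sq_exp_mul_norm_integral_le (hc : 0 ≤ c) (hcν : c ^ 3 = ν) (ha : a ≤ 4)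
    (hgap : ∀ s t, s ≤ t → 3 * (t - s) ^ 3 ≤ γ₁ t - γ₁ s) (κ : ℂ) {γ : ℝ → ℝ}
    (hγ : Continuous γ) (hγpos : ∀ s, 0 < γ s) {f : ℝ → ℂ} (hf : Continuous f) {I t : ℝ}
    (ht : t₀ ≤ t) (hI : ∫ s in t₀..t, (γ s)⁻¹ ≤ I) :
    (exp (a * c * t) * ‖∫ s in t₀..t, (exp (-(ν * (γ₁ t - γ₁ s))) : ℂ) * κ * f s‖) ^ 2 ≤
      ‖κ‖ ^ 2 * exp 8 * I * ∫ s in t₀..t,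
        exp (-(ν * (t - s) ^ 3)) * (exp (2 * a * c * s) * γ s * ‖f s‖ ^ 2) := by
  have hν : 0 ≤ ν := hcν ▸ pow_nonneg hc 3
  calc _ ≤ (‖κ‖ * exp 4 *
        ∫ s in t₀..t, exp (-(ν * (t - s) ^ 3)) * (exp (a * c * s) * ‖f s‖)) ^ 2 :=
        pow_le_pow_left₀ (by positivity) (exp_mul_norm_integral_le hc hcν ha hgap κ hf ht) 2
    _ = ‖κ‖ ^ 2 * exp 8 *
        (∫ s in t₀..t, exp (-(ν * (t - s) ^ 3)) * (exp (a * c * s) * ‖f s‖)) ^ 2 := by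
        rw [mul_pow, mul_pow, ← exp_nat_mul]; norm_num
    _ ≤ ‖κ‖ ^ 2 * exp 8 * (I * ∫ s in t₀..t,
        exp (-(ν * (t - s) ^ 3)) * γ s * (exp (a * c * s) * ‖f s‖) ^ 2) := by
        gcongr
        exact sq_integral_exp_neg_mul_cube_mul_le hν hγ hγpos (by fun_prop) ht hI
    _ = _ := by
        rw [← mul_assoc]
        congr 1
        refine integral_congr fun s _ => ?_
        rw [mul_pow, sq (exp _), ← exp_add]
        ring_nf

theorem sq_exp_mul_norm_le_integral (hc : 0 ≤ c) (hcν : c ^ 3 = ν) (ha : a ≤ 4)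
    (hgap : ∀ s t, s ≤ t → 3 * (t - s) ^ 3 ≤ γ₁ t - γ₁ s) (κ : ℂ) {γ : ℝ → ℝ}
    (hγ : Continuous γ) (hγpos : ∀ s, 0 < γ s) {f : ℝ → ℂ} (hf : Continuous f) {I T : ℝ}
    {F : ℝ → ℂ}
    (hF : ∀ t ∈ Icc t₀ T, F t = ∫ s in t₀..t, (exp (-(ν * (γ₁ t - γ₁ s))) : ℂ) * κ * f s)
    {t : ℝ} (ht : t ∈ Icc t₀ T) (hI : ∫ s in t₀..t, (γ s)⁻¹ ≤ I) :
    (exp (a * c * t) * ‖F t‖) ^ 2 ≤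
      ‖κ‖ ^ 2 * exp 8 * I * ∫ s in t₀..T, exp (2 * a * c * s) * γ s * ‖f s‖ ^ 2 := by
  have hν : 0 ≤ ν := hcν ▸ pow_nonneg hc 3
  have hq0 : ∀ s, 0 ≤ exp (2 * a * c * s) * γ s * ‖f s‖ ^ 2 := fun s => by
    have := (hγpos s).le; positivity
  have hI0 : 0 ≤ I := (integral_nonneg ht.1 fun s _ => (inv_pos.2 (hγpos s)).le).trans hI
  rw [hF t ht]
  refine (sq_exp_mul_norm_integral_le hc hcν ha hgap κ hγ hγpos hf ht.1 hI).trans ?_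
  gcongr
  calc _ ≤ ∫ s in t₀..t, exp (2 * a * c * s) * γ s * ‖f s‖ ^ 2 :=
        integral_mono_on ht.1 ((by fun_prop : Continuous _).intervalIntegrable _ _)
          ((by fun_prop : Continuous _).intervalIntegrable _ _) fun s hs =>
          mul_le_of_le_one_left (hq0 s) (exp_neg_mul_cube_le_one hν (sub_nonneg.2 hs.2))
    _ ≤ _ := integral_mono_interval le_rfl ht.1 ht.2 (ae_of_all _ hq0)
          ((by fun_prop : Continuous _).intervalIntegrable _ _)

theorem integral_exp_mul_norm_sq_le (hc : 0 < c) (hcν : c ^ 3 = ν) (ha : a ≤ 4)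
    (hgap : ∀ s t, s ≤ t → 3 * (t - s) ^ 3 ≤ γ₁ t - γ₁ s) (κ : ℂ) {γ : ℝ → ℝ}
    (hγ : Continuous γ) (hγpos : ∀ s, 0 < γ s) {f : ℝ → ℂ} (hf : Continuous f) {I T : ℝ}
    (hT : t₀ ≤ T) (hI : ∀ t ∈ Icc t₀ T, ∫ s in t₀..t, (γ s)⁻¹ ≤ I) {F : ℝ → ℂ}
    (hF : ∀ t ∈ Icc t₀ T, F t = ∫ s in t₀..t, (exp (-(ν * (γ₁ t - γ₁ s))) : ℂ) * κ * f s) :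
    ∫ t in t₀..T, exp (2 * a * c * t) * ‖F t‖ ^ 2 ≤
      ‖κ‖ ^ 2 * exp 9 * I * c⁻¹ * ∫ s in t₀..T, exp (2 * a * c * s) * γ s * ‖f s‖ ^ 2 := by
  set q : ℝ → ℝ := fun s => exp (2 * a * c * s) * γ s * ‖f s‖ ^ 2
  have hq : Continuous q := by fun_prop
  have hq0 : ∀ s, 0 ≤ q s := fun s => by have := (hγpos s).le; positivity
  have hI0 : 0 ≤ I := (integral_nonneg hT fun s _ => (inv_pos.2 (hγpos s)).le).trans
    (hI T ⟨hT, le_rfl⟩)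
  have hR : Continuous fun t => exp (-(c * t)) * ∫ s in t₀..t, exp (c * s) * q s :=
    (by fun_prop : Continuous fun t => exp (-(c * t))).mul
      (continuous_primitive (fun _ _ => (by fun_prop : Continuous _).intervalIntegrable _ _) t₀)
  calc _ ≤ ∫ t in t₀..T, ‖κ‖ ^ 2 * exp 8 * I * exp 1 *
        (exp (-(c * t)) * ∫ s in t₀..t, exp (c * s) * q s) := by
        refine integral_mono_on_of_nonneg hT (fun t _ => by positivity) (fun t ht => ?_)
          ((continuous_const.mul hR).intervalIntegrable _ _)
        rw [show exp (2 * a * c * t) = exp (a * c * t) ^ 2 by rw [← exp_nat_mul]; ring_nf,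
          ← mul_pow, mul_assoc _ (exp 1), hF t ht]
        refine (sq_exp_mul_norm_integral_le hc.le hcν ha hgap κ hγ hγpos hf ht.1
          (hI t ht)).trans ?_
        gcongr
        exact integral_exp_neg_mul_cube_mul_le hc.le hcν hq hq0 ht.1
    _ ≤ ‖κ‖ ^ 2 * exp 8 * I * exp 1 * (c⁻¹ * ∫ s in t₀..T, q s) := by
        rw [intervalIntegral.integral_const_mul]
        gcongr
        exact integral_exp_neg_mul_integral_exp_mul_le hc hq hq0 hT
    _ = _ := by
        rw [show exp 9 = exp 8 * exp 1 by rw [← exp_add]; norm_num]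
        ring

end Duhamel

/-- The paper's `γ(t)`: the squared length of the sheared wave vector `2π (k, η - k t, l)`. -/
noncomputable def shearSymbol (k l η t : ℝ) : ℝ := (2 * π) ^ 2 * (k ^ 2 + (η - k * t) ^ 2 + l ^ 2)

section ShearSymbol

variable {k : ℝ} (l η : ℝ)

lemma continuous_shearSymbol (k : ℝ) : Continuous (shearSymbol k l η) := by
  unfold shearSymbol; fun_prop

lemma shearSymbol_pos (hk : k ≠ 0) (t : ℝ) : 0 < shearSymbol k l η t := by
  unfold shearSymbol; positivity

lemma three_mul_cube_le_integral_shearSymbol (hk : 1 ≤ |k|) {s t : ℝ} (hst : s ≤ t) :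
    3 * (t - s) ^ 3 ≤ ∫ τ in s..t, shearSymbol k l η τ := by
  have hπk : 36 ≤ (2 * π) ^ 2 * k ^ 2 := by
    nlinarith [pi_gt_three, (one_le_sq_iff_one_le_abs k).2 hk]
  calc 3 * (t - s) ^ 3 ≤ (2 * π) ^ 2 * (k ^ 2 * (t - s) ^ 3 / 12) := by
        nlinarith [mul_le_mul_of_nonneg_right hπk (pow_nonneg (sub_nonneg.2 hst) 3)]
    _ ≤ (2 * π) ^ 2 * ∫ τ in s..t, (η - k * τ) ^ 2 := by
        gcongr; exact sq_mul_cube_div_twelve_le_integral_sq k η hst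
    _ = ∫ τ in s..t, (2 * π) ^ 2 * (η - k * τ) ^ 2 :=
        (intervalIntegral.integral_const_mul _ _).symm
    _ ≤ _ := integral_mono_on hst ((by fun_prop : Continuous _).intervalIntegrable _ _)
        ((continuous_shearSymbol l η k).intervalIntegrable _ _) fun τ _ => by
          unfold shearSymbol; gcongr; nlinarith [sq_nonneg l]

lemma three_mul_cube_le_sub_of_eq_integral_shearSymbol {t₀ : ℝ} {γ₁ : ℝ → ℝ} (hk : 1 ≤ |k|)
    (hγ₁ : ∀ t, γ₁ t = ∫ τ in t₀..t, shearSymbol k l η τ) {s t : ℝ} (hst : s ≤ t) :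
    3 * (t - s) ^ 3 ≤ γ₁ t - γ₁ s := by
  rw [hγ₁, hγ₁, integral_interval_sub_left ((continuous_shearSymbol l η k).intervalIntegrable _ _)
    ((continuous_shearSymbol l η k).intervalIntegrable _ _)]
  exact three_mul_cube_le_integral_shearSymbol l η hk hst

lemma integral_inv_shearSymbol_le (hk : k ≠ 0) (s t : ℝ) :
    ∫ τ in s..t, (shearSymbol k l η τ)⁻¹ ≤ (4 * π * |k| * √(k ^ 2 + l ^ 2))⁻¹ := by
  have hb : 0 < √(k ^ 2 + l ^ 2) := sqrt_pos.2 (by positivity)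
  calc _ = ((2 * π) ^ 2)⁻¹ * ∫ τ in s..t, (√(k ^ 2 + l ^ 2) ^ 2 + (η - k * τ) ^ 2)⁻¹ := by
        rw [← intervalIntegral.integral_const_mul, sq_sqrt (by positivity)]
        refine integral_congr fun τ _ => ?_
        rw [shearSymbol, ← mul_inv]
        ring_nf
    _ ≤ ((2 * π) ^ 2)⁻¹ * (π / (|k| * √(k ^ 2 + l ^ 2))) := by
        gcongr; exact integral_inv_sq_add_sub_mul_sq_le hb hk η s t
    _ = _ := by field_simp; ring

lemma norm_two_pi_I_mul_sq_mul_inv (hk : k ≠ 0) :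
    ‖2 * (π : ℂ) * Complex.I * k‖ ^ 2 * (4 * π * |k| * √(k ^ 2 + l ^ 2))⁻¹ =
      π * (|k| * (k ^ 2 + l ^ 2) ^ (-(1 : ℝ) / 2)) := by
  have hb : 0 < √(k ^ 2 + l ^ 2) := sqrt_pos.2 (by positivity)
  rw [neg_div, rpow_neg (by positivity), ← sqrt_eq_rpow]
  simp only [norm_mul, Complex.norm_ofNat, Complex.norm_real, Complex.norm_I,
    norm_of_nonneg pi_pos.le, Real.norm_eq_abs, mul_one]
  field_simp
  norm_num

end ShearSymbol

lemma rpow_one_third_pow_three {x : ℝ} (hx : 0 ≤ x) : (x ^ ((1 : ℝ) / 3)) ^ 3 = x := by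
  rw [← rpow_natCast, ← rpow_mul hx]; norm_num

lemma rpow_half_mul_rpow_neg_quarter {x y : ℝ} (hx : 0 ≤ x) (hy : 0 ≤ y) :
    x ^ ((1 : ℝ) / 2) * y ^ (-(1 : ℝ) / 4) = √(x * y ^ (-(1 : ℝ) / 2)) := by
  rw [sqrt_mul hx, sqrt_eq_rpow, sqrt_eq_rpow, ← rpow_mul hy]
  norm_num

section ShearDuhamel

variable {ν a t₀ k l η T : ℝ} {γ₁ : ℝ → ℝ} {f F : ℝ → ℂ}

theorem exp_mul_norm_shear_le (hν : 0 < ν) (ha : a ≤ 4) (hk : 1 ≤ |k|)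
    (hγ₁ : ∀ t, γ₁ t = ∫ τ in t₀..t, shearSymbol k l η τ) (hf : Continuous f)
    (hF : ∀ t ∈ Icc t₀ T, F t = ∫ s in t₀..t,
      (exp (-(ν * (γ₁ t - γ₁ s))) : ℂ) * (2 * (π : ℂ) * Complex.I * k) * f s)
    {t : ℝ} (ht : t ∈ Icc t₀ T) :
    exp (a * ν ^ ((1 : ℝ) / 3) * t) * ‖F t‖ ≤
      π * exp 9 * |k| ^ ((1 : ℝ) / 2) * (k ^ 2 + l ^ 2) ^ (-(1 : ℝ) / 4) *
        (∫ s in t₀..T, exp (2 * a * ν ^ ((1 : ℝ) / 3) * s) * shearSymbol k l η s *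
          ‖f s‖ ^ 2) ^ ((1 : ℝ) / 2) := by
  have hk0 : k ≠ 0 := by rintro rfl; norm_num at hk
  have hY : 0 ≤ |k| * (k ^ 2 + l ^ 2) ^ (-(1 : ℝ) / 2) := by positivity
  have hD : 0 ≤ ∫ s in t₀..T,
      exp (2 * a * ν ^ ((1 : ℝ) / 3) * s) * shearSymbol k l η s * ‖f s‖ ^ 2 :=
    integral_nonneg (ht.1.trans ht.2) fun s _ => by
      have := (shearSymbol_pos l η hk0 s).le; positivity
  have hC : π * exp 8 ≤ (π * exp 9) ^ 2 := by
    rw [mul_pow, ← exp_nat_mul]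
    exact mul_le_mul (le_self_pow₀ (by linarith [pi_gt_three]) two_ne_zero)
      (exp_le_exp.2 (by norm_num)) (exp_nonneg _) (by positivity)
  have h := sq_exp_mul_norm_le_integral (by positivity) (rpow_one_third_pow_three hν.le) ha
    (fun _ _ => three_mul_cube_le_sub_of_eq_integral_shearSymbol l η hk hγ₁) _
    (continuous_shearSymbol l η k) (shearSymbol_pos l η hk0) hf hF ht
    (integral_inv_shearSymbol_le l η hk0 t₀ t)
  rw [mul_right_comm _ (exp 8), norm_two_pi_I_mul_sq_mul_inv l hk0] at h
  rw [mul_assoc _ (|k| ^ _), rpow_half_mul_rpow_neg_quarter (abs_nonneg _) (by positivity),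
    ← sqrt_eq_rpow]
  refine (pow_le_pow_iff_left₀ (by positivity) (by positivity) two_ne_zero).1 (h.trans ?_)
  rw [mul_pow, mul_pow, sq_sqrt hY, sq_sqrt hD, mul_right_comm π]
  exact mul_le_mul_of_nonneg_right (mul_le_mul_of_nonneg_right hC hY) hD

theorem integral_exp_mul_norm_shear_sq_le (hν : 0 < ν) (ha : a ≤ 4) (hk : 1 ≤ |k|)
    (hγ₁ : ∀ t, γ₁ t = ∫ τ in t₀..t, shearSymbol k l η τ) (hf : Continuous f) (hT : t₀ ≤ T)
    (hF : ∀ t ∈ Icc t₀ T, F t = ∫ s in t₀..t,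
      (exp (-(ν * (γ₁ t - γ₁ s))) : ℂ) * (2 * (π : ℂ) * Complex.I * k) * f s) :
    ∫ t in t₀..T, exp (2 * a * ν ^ ((1 : ℝ) / 3) * t) * ‖F t‖ ^ 2 ≤
      π * exp 9 * ν ^ (-(1 : ℝ) / 3) * |k| * (k ^ 2 + l ^ 2) ^ (-(1 : ℝ) / 2) *
        ∫ s in t₀..T, exp (2 * a * ν ^ ((1 : ℝ) / 3) * s) * shearSymbol k l η s * ‖f s‖ ^ 2 := by
  have hk0 : k ≠ 0 := by rintro rfl; norm_num at hk
  have h := integral_exp_mul_norm_sq_le (by positivity) (rpow_one_third_pow_three hν.le) ha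
    (fun _ _ => three_mul_cube_le_sub_of_eq_integral_shearSymbol l η hk hγ₁) _
    (continuous_shearSymbol l η k) (shearSymbol_pos l η hk0) hf hT
    (fun t _ => integral_inv_shearSymbol_le l η hk0 t₀ t) hF
  rw [mul_right_comm _ (exp 9), norm_two_pi_I_mul_sq_mul_inv l hk0] at h
  rw [neg_div, rpow_neg hν.le, ← one_div]
  exact h.trans_eq (by ring)

end ShearDuhamel

/-- Fixed-frequency inviscid-damping estimate for the Duhamel term driven by `∂_x f₁`:
with `γ(t) = (2π)²(k² + (η − k t)² + l²)`, `γ₁(t) = ∫₁^t γ(s) ds` and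
`F₁(t) = ∫₁^t e^{−ν(γ₁(t)−γ₁(s))} 2πik f₁(s) ds`, one has
`sup_{t∈[1,T]} e^{aν^{1/3}t}|F₁(t)| ≤ C |k|^{1/2}(k²+l²)^{−1/4} ‖e^{aν^{1/3}s} γ^{1/2} f₁‖_{L²(1,T)}`
and `‖e^{aν^{1/3}t}F₁‖²_{L²(1,T)} ≤ C ν^{−1/3} |k|(k²+l²)^{−1/2} ‖e^{aν^{1/3}s} γ^{1/2} f₁‖²_{L²(1,T)}`. -/
theorem stmt5 : ∃ C : ℝ, 0 < C ∧ ∀ (ν T a : ℝ) (k l : ℤ) (η : ℝ) (f₁ : ℝ → ℂ),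
    0 < ν → ν < 1 → 1 < T → 0 ≤ a → a ≤ 4 → k ≠ 0 →
    ContinuousOn f₁ (Set.Icc 1 T) →
    ∀ γ γ₁ : ℝ → ℝ,
    (∀ t, γ t = (2 * Real.pi) ^ 2 * ((k : ℝ) ^ 2 + (η - (k : ℝ) * t) ^ 2 + (l : ℝ) ^ 2)) →
    (∀ t, γ₁ t = ∫ s in (1:ℝ)..t, γ s) →
    ∀ F₁ : ℝ → ℂ,
    (∀ t, F₁ t = ∫ s in (1:ℝ)..t,
        (Real.exp (-(ν * (γ₁ t - γ₁ s))) : ℂ) *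
          (2 * (Real.pi : ℂ) * Complex.I * (k : ℂ)) * f₁ s) →
    (∀ t ∈ Set.Icc (1:ℝ) T,
        Real.exp (a * ν ^ ((1:ℝ)/3) * t) * ‖F₁ t‖ ≤
          C * |(k : ℝ)| ^ ((1:ℝ)/2) * ((k : ℝ) ^ 2 + (l : ℝ) ^ 2) ^ (-(1:ℝ)/4) *
            (∫ s in (1:ℝ)..T,
              Real.exp (2 * a * ν ^ ((1:ℝ)/3) * s) * γ s * ‖f₁ s‖ ^ 2) ^ ((1:ℝ)/2)) ∧
    (∫ t in (1:ℝ)..T, Real.exp (2 * a * ν ^ ((1:ℝ)/3) * t) * ‖F₁ t‖ ^ 2) ≤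
        C * ν ^ (-(1:ℝ)/3) * |(k : ℝ)| * ((k : ℝ) ^ 2 + (l : ℝ) ^ 2) ^ (-(1:ℝ)/2) *
          ∫ s in (1:ℝ)..T, Real.exp (2 * a * ν ^ ((1:ℝ)/3) * s) * γ s * ‖f₁ s‖ ^ 2 := by
  refine ⟨π * exp 9, by positivity, ?_⟩
  intro ν T a k l η f₁ hν _ hT _ ha hk hf₁ γ γ₁ hγ hγ₁ F₁ hF₁
  obtain rfl : γ = shearSymbol k l η := funext hγ
  have hk1 : (1 : ℝ) ≤ |(k : ℝ)| := by exact_mod_cast Int.one_le_abs hk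
  set f := IccExtend hT.le ((Icc 1 T).domRestrict f₁)
  have hf : Continuous f := continuous_IccExtend_iff.2 hf₁.domRestrict
  have hff₁ : EqOn f f₁ (Icc 1 T) := fun s hs => IccExtend_of_mem _ _ hs
  have hF : ∀ t ∈ Icc 1 T, F₁ t = ∫ s in (1 : ℝ)..t, (exp (-(ν * (γ₁ t - γ₁ s))) : ℂ) *
      (2 * (π : ℂ) * Complex.I * (k : ℝ)) * f s := fun t ht => by
    rw [hF₁, Complex.ofReal_intCast]
    refine integral_congr fun s hs => ?_
    rw [uIcc_of_le ht.1] at hs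
    rw [hff₁ ⟨hs.1, hs.2.trans ht.2⟩]
  have hD : ∫ s in (1 : ℝ)..T,
        exp (2 * a * ν ^ ((1 : ℝ) / 3) * s) * shearSymbol k l η s * ‖f₁ s‖ ^ 2 =
      ∫ s in (1 : ℝ)..T, exp (2 * a * ν ^ ((1 : ℝ) / 3) * s) * shearSymbol k l η s * ‖f s‖ ^ 2 :=
    integral_congr fun s hs => by rw [uIcc_of_le hT.le] at hs; rw [hff₁ hs]
  refine ⟨fun t ht => ?_, ?_⟩ <;> rw [hD]
  · exact exp_mul_norm_shear_le hν ha hk1 hγ₁ hf hF ht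
  · exact integral_exp_mul_norm_shear_sq_le hν ha hk1 hγ₁ hf hT.le hF
end

section
/- There exists a constant C > 0 such that for all t ∈ [1,T], one has ∫₁^t exp(−2ν(γ₁(t) − γ₁(s))) · exp((2a+1) ν^{1/3} (t − s)) · γ(s) ds ≤ C ν^{−1}. The constant C is independent of ν, T, a, k, l, η, t. -/
/-- With `γ(t) = (2π)²(k² + (η − k t)² + l²)` and `γ₁(t) = ∫₁^t γ(s) ds`, there is a
constant `C > 0` (independent of `ν, T, a, k, l, η, t`) such that for all `t ∈ [1,T]`:
`∫₁^t e^{−2ν(γ₁(t) − γ₁(s))} e^{(2a+1) ν^{1/3} (t − s)} γ(s) ds ≤ C ν^{−1}`. -/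
theorem stmt7 : ∃ C : ℝ, 0 < C ∧ ∀ (ν T a : ℝ) (k l : ℤ) (η : ℝ),
    0 < ν → ν < 1 → 1 < T → 0 ≤ a → a ≤ 4 → k ≠ 0 →
    ∀ γ γ₁ : ℝ → ℝ,
    (∀ t, γ t = (2 * Real.pi) ^ 2 * ((k : ℝ) ^ 2 + (η - (k : ℝ) * t) ^ 2 + (l : ℝ) ^ 2)) →
    (∀ t, γ₁ t = ∫ s in (1:ℝ)..t, γ s) →
    ∀ t ∈ Set.Icc (1:ℝ) T,
      (∫ s in (1:ℝ)..t,
          Real.exp (-(2 * ν * (γ₁ t - γ₁ s))) *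
            Real.exp ((2 * a + 1) * ν ^ ((1:ℝ)/3) * (t - s)) * γ s)
        ≤ C * ν⁻¹ := by
  refine ⟨Real.exp 6, Real.exp_pos 6, ?_⟩
  intro ν T a k l η hν hν1 hT ha ha4 hk γ γ₁ hγ hγ₁ t ht
  obtain ⟨ht1, htT⟩ := ht
  set G : ℝ → ℝ := fun u => (2*Real.pi)^2 *
    (((k:ℝ)^2 + (l:ℝ)^2 + η^2)*u - η*(k:ℝ)*u^2 + (k:ℝ)^2*u^3/3) with hGdef
  have hG : ∀ u : ℝ, HasDerivAt G (γ u) u := by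
    intro u
    have h1 : HasDerivAt (fun u:ℝ => u) 1 u := hasDerivAt_id u
    have h2 : HasDerivAt (fun u:ℝ => u^2) (2*u) u := by simpa using hasDerivAt_pow 2 u
    have h3 : HasDerivAt (fun u:ℝ => u^3) (3*u^2) u := by
      simpa using hasDerivAt_pow 3 u
    have h := ((((h1.const_mul ((k:ℝ)^2 + (l:ℝ)^2 + η^2)).sub
        (h2.const_mul (η*(k:ℝ)))).add
        ((h3.const_mul ((k:ℝ)^2)).div_const 3)).const_mul ((2*Real.pi)^2))
    have heq : γ u = (2*Real.pi)^2 *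
        (((k:ℝ)^2 + (l:ℝ)^2 + η^2) * 1 - η*(k:ℝ)*(2*u) + (k:ℝ)^2*(3*u^2)/3) := by
      rw [hγ]; ring
    rw [heq]
    exact h
  have hGc : Continuous G := by fun_prop
  have hγc : Continuous γ := by
    have h : γ = fun s => (2*Real.pi)^2 * ((k:ℝ)^2 + (η - (k:ℝ)*s)^2 + (l:ℝ)^2) :=
      funext hγ
    rw [h]; fun_prop
  have hγnn : ∀ s, 0 ≤ γ s := by
    intro s; rw [hγ]; positivity
  have hγ₁eq : ∀ s, γ₁ s = G s - G 1 := by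
    intro s
    rw [hγ₁]
    exact intervalIntegral.integral_eq_sub_of_hasDerivAt (fun u _ => hG u)
      (hγc.intervalIntegrable _ _)
  have hk2 : (1:ℝ) ≤ (k:ℝ)^2 := by
    have h := Int.one_le_abs hk
    have : (1:ℤ) ≤ k^2 := by nlinarith [sq_abs k]
    exact_mod_cast this
  have hπ : (3:ℝ) < Real.pi := Real.pi_gt_three
  have hG3 : ∀ s : ℝ, s ≤ t → 3*(t-s)^3 ≤ G t - G s := by
    intro s hst
    have hts : 0 ≤ t - s := by linarith
    have hQ : (k:ℝ)^2*(t-s)^3/12 ≤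
        ((k:ℝ)^2 + (l:ℝ)^2 + η^2)*(t-s) - η*(k:ℝ)*(t^2-s^2) + (k:ℝ)^2*(t^3-s^3)/3 := by
      nlinarith [mul_nonneg hts (sq_nonneg (2*η - (k:ℝ)*(t+s))),
        mul_nonneg hts (sq_nonneg (l:ℝ)), mul_nonneg hts (sq_nonneg (k:ℝ)),
        mul_nonneg hts (sq_nonneg η)]
    have h36 : (36:ℝ) ≤ (2*Real.pi)^2 * (k:ℝ)^2 := by nlinarith
    calc 3*(t-s)^3 = 36 * ((t-s)^3/12) := by ring
      _ ≤ ((2*Real.pi)^2 * (k:ℝ)^2) * ((t-s)^3/12) :=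
          mul_le_mul_of_nonneg_right h36 (by positivity)
      _ = (2*Real.pi)^2 * ((k:ℝ)^2*(t-s)^3/12) := by ring
      _ ≤ (2*Real.pi)^2 * (((k:ℝ)^2 + (l:ℝ)^2 + η^2)*(t-s) - η*(k:ℝ)*(t^2-s^2)
            + (k:ℝ)^2*(t^3-s^3)/3) :=
          mul_le_mul_of_nonneg_left hQ (by positivity)
      _ = G t - G s := by rw [hGdef]; ring
  set F : ℝ → ℝ := fun s => Real.exp (ν * G s - ν * G t) with hF
  have hFderiv : ∀ s : ℝ, HasDerivAt F (ν * (γ s * F s)) s := by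
    intro s
    have h := (((hG s).const_mul ν).sub_const (ν * G t)).exp
    convert h using 1
    rw [hF]; ring
  have hFc : Continuous F := by
    rw [hF]; exact ((continuous_const.mul hGc).sub continuous_const).rexp
  have hFTC : ∫ s in (1:ℝ)..t, ν * (γ s * F s) = F t - F 1 :=
    intervalIntegral.integral_eq_sub_of_hasDerivAt (fun s _ => hFderiv s)
      ((continuous_const.mul (hγc.mul hFc)).intervalIntegrable _ _)
  have hFt : F t = 1 := by rw [hF]; simp
  have hI : ∫ s in (1:ℝ)..t, γ s * F s ≤ ν⁻¹ := by
    have h1 : ν * ∫ s in (1:ℝ)..t, γ s * F s = F t - F 1 := by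
      rw [← hFTC, intervalIntegral.integral_const_mul]
    have hF1 : 0 < F 1 := Real.exp_pos _
    have h2 : ν * ∫ s in (1:ℝ)..t, γ s * F s ≤ 1 := by
      rw [h1, hFt]; linarith
    calc (∫ s in (1:ℝ)..t, γ s * F s)
        = ν⁻¹ * (ν * ∫ s in (1:ℝ)..t, γ s * F s) := by field_simp
      _ ≤ ν⁻¹ * 1 := mul_le_mul_of_nonneg_left h2 (inv_nonneg.mpr hν.le)
      _ = ν⁻¹ := mul_one _
  have hmono : (∫ s in (1:ℝ)..t,
      Real.exp (-(2 * ν * (γ₁ t - γ₁ s))) *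
        Real.exp ((2 * a + 1) * ν ^ ((1:ℝ)/3) * (t - s)) * γ s)
      ≤ ∫ s in (1:ℝ)..t, Real.exp 6 * (γ s * F s) := by
    have hγ₁c : Continuous γ₁ := by
      have h : γ₁ = fun s => G s - G 1 := funext hγ₁eq
      rw [h]; exact hGc.sub continuous_const
    apply intervalIntegral.integral_mono_on ht1
    · exact (((((continuous_const.mul ((continuous_const.sub hγ₁c))).neg).rexp).mul
        ((continuous_const.mul (continuous_const.sub continuous_id)).rexp)).mul
        hγc).intervalIntegrable _ _
    · exact (continuous_const.mul (hγc.mul hFc)).intervalIntegrable _ _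
    intro s hs
    obtain ⟨hs1, hst⟩ := hs
    have hΔ : γ₁ t - γ₁ s = G t - G s := by rw [hγ₁eq, hγ₁eq]; ring
    set x : ℝ := ν ^ ((1:ℝ)/3) * (t - s) with hx
    have hxnn : 0 ≤ x := mul_nonneg (Real.rpow_nonneg hν.le _) (by linarith)
    have hx3 : x^3 = ν * (t-s)^3 := by
      have hcube : (ν ^ ((1:ℝ)/3))^(3:ℕ) = ν := by
        rw [← Real.rpow_natCast (ν ^ ((1:ℝ)/3)) 3, ← Real.rpow_mul hν.le]
        norm_num
      rw [hx, mul_pow, hcube]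
    have key : (2*a+1)*x ≤ 6 + ν*(γ₁ t - γ₁ s) := by
      have h9 : (2*a+1)*x ≤ 9*x := mul_le_mul_of_nonneg_right (by linarith) hxnn
      have hc : 9*x ≤ 6 + 3*x^3 := by
        nlinarith [sq_nonneg (x-1), mul_nonneg (sq_nonneg (x-1)) hxnn]
      have hGd := hG3 s hst
      have h3 : 3*x^3 ≤ ν*(G t - G s) := by
        rw [hx3]
        nlinarith [mul_le_mul_of_nonneg_left hGd hν.le]
      rw [hΔ]; linarith
    have hΔnn : 0 ≤ γ₁ t - γ₁ s := by
      rw [hΔ]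
      have := hG3 s hst
      nlinarith [pow_nonneg (show (0:ℝ) ≤ t - s by linarith) 3]
    have harg : -(2 * ν * (γ₁ t - γ₁ s)) + (2 * a + 1) * ν ^ ((1:ℝ)/3) * (t - s)
        ≤ 6 + (ν * G s - ν * G t) := by
      have hE : (2 * a + 1) * ν ^ ((1:ℝ)/3) * (t - s) = (2*a+1)*x := by rw [hx]; ring
      have hν' : 0 ≤ ν * (γ₁ t - γ₁ s) := mul_nonneg hν.le hΔnn
      have : ν * G s - ν * G t = -(ν * (γ₁ t - γ₁ s)) := by rw [hΔ]; ring
      rw [hE, this]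
      linarith
    calc Real.exp (-(2 * ν * (γ₁ t - γ₁ s))) *
          Real.exp ((2 * a + 1) * ν ^ ((1:ℝ)/3) * (t - s)) * γ s
        = Real.exp (-(2 * ν * (γ₁ t - γ₁ s)) + (2 * a + 1) * ν ^ ((1:ℝ)/3) * (t - s))
            * γ s := by rw [Real.exp_add]
      _ ≤ Real.exp (6 + (ν * G s - ν * G t)) * γ s :=
          mul_le_mul_of_nonneg_right (Real.exp_le_exp.mpr harg) (hγnn s)
      _ = Real.exp 6 * (γ s * F s) := by rw [Real.exp_add, hF]; ring
  calc (∫ s in (1:ℝ)..t,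
        Real.exp (-(2 * ν * (γ₁ t - γ₁ s))) *
          Real.exp ((2 * a + 1) * ν ^ ((1:ℝ)/3) * (t - s)) * γ s)
      ≤ ∫ s in (1:ℝ)..t, Real.exp 6 * (γ s * F s) := hmono
    _ = Real.exp 6 * ∫ s in (1:ℝ)..t, γ s * F s :=
        intervalIntegral.integral_const_mul _ _
    _ ≤ Real.exp 6 * ν⁻¹ := mul_le_mul_of_nonneg_left hI (Real.exp_pos 6).le
end

section
/- There exists a constant C > 0 with the following property. Define F₃(t) = ∫₁^t exp(−ν(γ₁(t) − γ₁(s))) f₃(s) ds for t ∈ [1,T], where f₃ : [1,T] → ℂ is continuous. Then sup_{t ∈ [1,T]} e^{a ν^{1/3} t} |F₃(t)| ≤ C ν^{−1/2} (∫₁^T e^{2 a ν^{1/3} s} γ(s)^{−1} |f₃(s)|² ds)^{1/2}, and ∫₁^T e^{2 a ν^{1/3} t} |F₃(t)|² dt ≤ C ν^{−4/3} ∫₁^T e^{2 a ν^{1/3} s} γ(s)^{−1} |f₃(s)|² ds. The constant C is independent of ν, T, a, k, l, η, f₃. -/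
/-!
Write `b = ν^{1/3}`. Since `γ ≥ (2π)²(η - k s)²` and `k² ≥ 1`, integrating the square of an affine
function gives `γ₁ t - γ₁ s ≥ 3 (t - s)³`, so the dissipation `ν (γ₁ t - γ₁ s) ≥ 3 (b (t - s))³`
beats the weight growth `2 a b (t - s) ≤ 8 b (t - s)` up to the constant `e¹⁷` and a leftover decay
`e^{-b (t - s)}`. Cauchy–Schwarz against `γ e^{-ν (γ₁ t - γ₁ s)}`, whose integral is at most `1/ν`,
gives `e^{2abt} |F₃ t|² ≤ (e¹⁷/ν) ∫₁ᵗ e^{-b (t - s)} W s ds` with `W` the weighted forcing density.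
Dropping the decay yields the sup bound; integrating in `t`, the kernel `e^{-b (t - s)}` contributes
`1/b = ν^{-1/3}`, which yields the `L²` bound.
-/

open MeasureTheory intervalIntegral Set Real

theorem sq_intervalIntegral_mul_le {f g : ℝ → ℝ} {x y : ℝ} (hxy : x ≤ y)
    (hf : Continuous f) (hg : Continuous g) :
    (∫ u in x..y, f u * g u) ^ 2 ≤ (∫ u in x..y, f u ^ 2) * ∫ u in x..y, g u ^ 2 := by
  have memLp {φ : ℝ → ℝ} (hφ : Continuous φ) :
      MemLp (fun u => |φ u|) (ENNReal.ofReal 2) (volume.restrict (Ioc x y)) := by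
    rw [ENNReal.ofReal_ofNat, memLp_two_iff_integrable_sq hφ.abs.aestronglyMeasurable]
    simp only [sq_abs]
    exact (show Continuous fun u => φ u ^ 2 by fun_prop).integrableOn_Ioc
  have holder := integral_mul_le_Lp_mul_Lq_of_nonneg Real.HolderConjugate.two_two
    (ae_of_all _ fun u => abs_nonneg (f u)) (ae_of_all _ fun u => abs_nonneg (g u))
    (memLp hf) (memLp hg)
  simp only [Real.rpow_two, sq_abs, ← Real.sqrt_eq_rpow, ← abs_mul] at holder
  rw [integral_of_le hxy, integral_of_le hxy, integral_of_le hxy]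
  calc (∫ u in Ioc x y, f u * g u) ^ 2 ≤ (∫ u in Ioc x y, |f u * g u|) ^ 2 := by
        rw [← sq_abs]
        exact pow_le_pow_left₀ (abs_nonneg _) abs_integral_le_integral_abs 2
    _ ≤ (√(∫ u in Ioc x y, f u ^ 2) * √(∫ u in Ioc x y, g u ^ 2)) ^ 2 :=
        pow_le_pow_left₀ (integral_nonneg fun _ => abs_nonneg _) holder 2
    _ = _ := by
        rw [mul_pow, sq_sqrt (integral_nonneg fun _ => sq_nonneg _),
          sq_sqrt (integral_nonneg fun _ => sq_nonneg _)]

theorem mul_cube_div_twelve_le_integral_sq_sub_mul (η K : ℝ) {s t : ℝ} (hst : s ≤ t) :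
    K ^ 2 * (t - s) ^ 3 / 12 ≤ ∫ τ in s..t, (η - K * τ) ^ 2 := by
  have hderiv : ∀ τ ∈ uIcc s t,
      HasDerivAt (fun τ => η ^ 2 * τ - η * K * τ ^ 2 + K ^ 2 * τ ^ 3 / 3) ((η - K * τ) ^ 2) τ :=
    fun τ _ => by
      refine ((((hasDerivAt_id τ).const_mul (η ^ 2)).sub
        ((hasDerivAt_pow 2 τ).const_mul (η * K))).add
          (((hasDerivAt_pow 3 τ).const_mul (K ^ 2)).div_const 3)).congr_deriv ?_
      ring
  rw [integral_eq_sub_of_hasDerivAt hderiv ((by fun_prop : Continuous _).intervalIntegrable _ _)]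
  -- the difference of the two sides is `(t - s) (η - K (s + t) / 2)²`
  nlinarith [mul_nonneg (sub_nonneg.2 hst) (sq_nonneg (2 * η - K * (s + t)))]

theorem three_mul_cube_le_integral_s8 {K : ℝ} (hK : 1 ≤ K ^ 2) (η L : ℝ) {s t : ℝ} (hst : s ≤ t) :
    3 * (t - s) ^ 3 ≤ ∫ τ in s..t, (2 * π) ^ 2 * (K ^ 2 + (η - K * τ) ^ 2 + L ^ 2) := by
  calc 3 * (t - s) ^ 3 ≤ (2 * π) ^ 2 * (K ^ 2 * (t - s) ^ 3 / 12) := by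
        have hcube := pow_nonneg (sub_nonneg.2 hst) 3
        have hπ : 36 ≤ (2 * π) ^ 2 := by nlinarith [pi_gt_three]
        nlinarith [mul_le_mul_of_nonneg_right hπ (mul_nonneg (sq_nonneg K) hcube),
          mul_le_mul_of_nonneg_right hK hcube]
    _ ≤ (2 * π) ^ 2 * ∫ τ in s..t, (η - K * τ) ^ 2 := by
        gcongr
        exact mul_cube_div_twelve_le_integral_sq_sub_mul η K hst
    _ = ∫ τ in s..t, (2 * π) ^ 2 * (η - K * τ) ^ 2 :=
        (intervalIntegral.integral_const_mul _ _).symm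
    _ ≤ _ := integral_mono_on hst ((by fun_prop : Continuous _).intervalIntegrable _ _)
        ((by fun_prop : Continuous _).intervalIntegrable _ _) fun τ _ => by
          gcongr
          nlinarith [sq_nonneg K, sq_nonneg L]

/-- The inner integral `J` solves `J' = W - b J` with `J x = 0`, so `b ∫ J = ∫ W - J y`. -/
theorem integral_integral_exp_neg_mul_le {W : ℝ → ℝ} (hW : Continuous W) (hW0 : ∀ s, 0 ≤ W s)
    {b x y : ℝ} (hb : 0 < b) (hxy : x ≤ y) :
    ∫ t in x..y, (∫ s in x..t, exp (-(b * (t - s))) * W s) ≤ b⁻¹ * ∫ t in x..y, W t := by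
  set J := fun t => ∫ s in x..t, exp (-(b * (t - s))) * W s
  have hJ : ∀ t, J t = exp (-(b * t)) * ∫ s in x..t, exp (b * s) * W s := fun t => by
    rw [← intervalIntegral.integral_const_mul]
    refine intervalIntegral.integral_congr fun s _ => ?_
    rw [← mul_assoc, ← exp_add]
    ring_nf
  have hderiv : ∀ t, HasDerivAt J (W t - b * J t) t := fun t => by
    have hexp : exp (-(b * t)) * exp (b * t) = 1 := by rw [← exp_add]; simp
    rw [show J = _ from funext hJ]
    refine (((hasDerivAt_id t).const_mul b).neg.exp.mul
      ((by fun_prop : Continuous fun s => exp (b * s) * W s).integral_hasStrictDerivAt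
        x t).hasDerivAt).congr_deriv ?_
    simp only [Pi.neg_apply, id, mul_one]
    linear_combination (W t) * hexp
  have hJc : Continuous J := continuous_iff_continuousAt.2 fun t => (hderiv t).continuousAt
  have hFTC := integral_eq_sub_of_hasDerivAt (fun t _ => hderiv t)
    ((hW.sub (hJc.const_mul b)).intervalIntegrable x y)
  rw [intervalIntegral.integral_sub (hW.intervalIntegrable x y)
    ((hJc.const_mul b).intervalIntegrable x y), intervalIntegral.integral_const_mul] at hFTC
  have hJy : 0 ≤ J y := integral_nonneg hxy fun s _ => mul_nonneg (exp_nonneg _) (hW0 s)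
  have hJx : J x = 0 := integral_same
  rw [le_inv_mul_iff₀ hb]
  linarith

/-- With `u = b d` the left side is at most `8 u - 3 u³`,
and `17 ≥ max_{u ≥ 0} (9 u - 3 u³) = 6 √3`. -/
theorem two_mul_mul_sub_cube_mul_le {a b d Δ : ℝ} (ha4 : a ≤ 4) (hb : 0 < b)
    (hd : 0 ≤ d) (hΔ : 3 * d ^ 3 ≤ Δ) : 2 * a * b * d - b ^ 3 * Δ ≤ 17 - b * d := by
  have hx : 0 ≤ b * d := mul_nonneg hb.le hd
  have hcube : 3 * (b * d) ^ 3 ≤ b ^ 3 * Δ := by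
    rw [mul_pow, mul_left_comm]; exact mul_le_mul_of_nonneg_left hΔ (pow_nonneg hb.le 3)
  nlinarith [mul_nonneg hx (sq_nonneg (b * d - 1)), mul_le_mul_of_nonneg_right ha4 hx]

section Duhamel

variable {E : Type*} [NormedAddCommGroup E] [NormedSpace ℝ E] {γ γ₁ : ℝ → ℝ} {ν x t : ℝ}

noncomputable def duhamel (ν : ℝ) (γ₁ : ℝ → ℝ) (x : ℝ) (f : ℝ → E) (t : ℝ) : E :=
  ∫ s in x..t, exp (-(ν * (γ₁ t - γ₁ s))) • f s

theorem integral_mul_exp_neg_mul_sub_le (hγ : Continuous γ)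
    (hγ₁ : ∀ s, HasDerivAt γ₁ (γ s) s) (hν : 0 < ν) :
    ∫ s in x..t, γ s * exp (-(ν * (γ₁ t - γ₁ s))) ≤ ν⁻¹ := by
  have hderiv : ∀ s ∈ uIcc x t, HasDerivAt (fun s => exp (-(ν * (γ₁ t - γ₁ s))) / ν)
      (γ s * exp (-(ν * (γ₁ t - γ₁ s)))) s := fun s _ => by
    refine ((((hγ₁ s).const_sub (γ₁ t)).const_mul ν).neg.exp.div_const ν).congr_deriv ?_
    simp only [Pi.neg_apply]
    field_simp
  have hγ₁c : Continuous γ₁ := continuous_iff_continuousAt.2 fun s => (hγ₁ s).continuousAt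
  rw [integral_eq_sub_of_hasDerivAt hderiv ((by fun_prop : Continuous _).intervalIntegrable _ _)]
  simp only [sub_self, mul_zero, neg_zero, exp_zero, one_div]
  have := exp_nonneg (-(ν * (γ₁ t - γ₁ x)))
  rw [div_eq_mul_inv]
  nlinarith [inv_pos.2 hν]

theorem sq_integral_exp_mul_le (hγ : Continuous γ) (hγ0 : ∀ s, 0 < γ s)
    (hγ₁ : ∀ s, HasDerivAt γ₁ (γ s) s) (hν : 0 < ν) {φ : ℝ → ℝ} (hφ : Continuous φ)
    (hxt : x ≤ t) :
    (∫ s in x..t, exp (-(ν * (γ₁ t - γ₁ s))) * φ s) ^ 2 ≤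
      ν⁻¹ * ∫ s in x..t, exp (-(ν * (γ₁ t - γ₁ s))) * (γ s)⁻¹ * φ s ^ 2 := by
  have hγ₁c : Continuous γ₁ := continuous_iff_continuousAt.2 fun s => (hγ₁ s).continuousAt
  set e := fun s => exp (-(ν * (γ₁ t - γ₁ s)))
  have hγinv : Continuous fun s => (γ s)⁻¹ := hγ.inv₀ fun s => (hγ0 s).ne'
  have hsplit : ∀ s, e s * φ s = √(γ s * e s) * (√(e s * (γ s)⁻¹) * φ s) := fun s => by
    rw [← mul_assoc, ← sqrt_mul (mul_pos (hγ0 s) (exp_pos _)).le,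
      show γ s * e s * (e s * (γ s)⁻¹) = e s ^ 2 by field_simp [(hγ0 s).ne'],
      sqrt_sq (exp_pos _).le]
  calc (∫ s in x..t, e s * φ s) ^ 2
      = (∫ s in x..t, √(γ s * e s) * (√(e s * (γ s)⁻¹) * φ s)) ^ 2 := by simp only [hsplit]
    _ ≤ (∫ s in x..t, √(γ s * e s) ^ 2) * ∫ s in x..t, (√(e s * (γ s)⁻¹) * φ s) ^ 2 :=
        sq_intervalIntegral_mul_le hxt (by fun_prop) (by fun_prop)
    _ = (∫ s in x..t, γ s * e s) * ∫ s in x..t, e s * (γ s)⁻¹ * φ s ^ 2 := by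
        congr 1 <;> refine integral_congr fun s _ => ?_
        · exact sq_sqrt (mul_pos (hγ0 s) (exp_pos _)).le
        · rw [mul_pow, sq_sqrt (mul_pos (exp_pos _) (inv_pos.2 (hγ0 s))).le]
    _ ≤ ν⁻¹ * ∫ s in x..t, e s * (γ s)⁻¹ * φ s ^ 2 :=
        mul_le_mul_of_nonneg_right (integral_mul_exp_neg_mul_sub_le hγ hγ₁ hν)
          (integral_nonneg hxt fun s _ =>
            mul_nonneg (mul_nonneg (exp_pos _).le (inv_pos.2 (hγ0 s)).le) (sq_nonneg _))

theorem exp_mul_sq_norm_duhamel_le (hγ : Continuous γ) (hγ0 : ∀ s, 0 < γ s)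
    (hγ₁ : ∀ s, HasDerivAt γ₁ (γ s) s)
    (hγ₁_growth : ∀ s t, s ≤ t → 3 * (t - s) ^ 3 ≤ γ₁ t - γ₁ s)
    (hν : 0 < ν) {a : ℝ} (ha4 : a ≤ 4) {f : ℝ → E} (hf : Continuous f) (hxt : x ≤ t) :
    exp (2 * a * ν ^ ((1:ℝ)/3) * t) * ‖duhamel ν γ₁ x f t‖ ^ 2 ≤
      exp 17 / ν * ∫ s in x..t, exp (-(ν ^ ((1:ℝ)/3) * (t - s))) *
        (exp (2 * a * ν ^ ((1:ℝ)/3) * s) * (γ s)⁻¹ * ‖f s‖ ^ 2) := by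
  set b := ν ^ ((1:ℝ)/3)
  have hb : 0 < b := rpow_pos_of_pos hν _
  have hb3 : b ^ 3 = ν := by
    rw [← rpow_natCast, ← rpow_mul hν.le]; norm_num
  have hγ₁c : Continuous γ₁ := continuous_iff_continuousAt.2 fun s => (hγ₁ s).continuousAt
  have hγinv : Continuous fun s => (γ s)⁻¹ := hγ.inv₀ fun s => (hγ0 s).ne'
  have hnorm : ‖duhamel ν γ₁ x f t‖ ≤ ∫ s in x..t, exp (-(ν * (γ₁ t - γ₁ s))) * ‖f s‖ :=
    (intervalIntegral.norm_integral_le_integral_norm hxt).trans_eq <|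
      intervalIntegral.integral_congr fun s _ => by
        simp only [norm_smul, norm_of_nonneg (exp_pos _).le]
  have hweight : ∀ s ∈ Icc x t, exp (2 * a * b * t) * exp (-(ν * (γ₁ t - γ₁ s))) ≤
      exp 17 * exp (-(b * (t - s))) * exp (2 * a * b * s) := fun s hs => by
    have := two_mul_mul_sub_cube_mul_le ha4 hb (sub_nonneg.2 hs.2) (hγ₁_growth s t hs.2)
    rw [hb3] at this
    simp only [← exp_add]
    exact exp_le_exp.2 (by linarith)
  calc exp (2 * a * b * t) * ‖duhamel ν γ₁ x f t‖ ^ 2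
      ≤ exp (2 * a * b * t) * (∫ s in x..t, exp (-(ν * (γ₁ t - γ₁ s))) * ‖f s‖) ^ 2 := by
        gcongr
    _ ≤ exp (2 * a * b * t) *
          (ν⁻¹ * ∫ s in x..t, exp (-(ν * (γ₁ t - γ₁ s))) * (γ s)⁻¹ * ‖f s‖ ^ 2) := by
        gcongr
        exact sq_integral_exp_mul_le hγ hγ0 hγ₁ hν hf.norm hxt
    _ = ν⁻¹ * ∫ s in x..t,
          exp (2 * a * b * t) * exp (-(ν * (γ₁ t - γ₁ s))) * ((γ s)⁻¹ * ‖f s‖ ^ 2) := by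
        rw [← intervalIntegral.integral_const_mul, ← intervalIntegral.integral_const_mul,
          ← intervalIntegral.integral_const_mul]
        congr 1; ext s; ring
    _ ≤ ν⁻¹ * ∫ s in x..t,
          exp 17 * exp (-(b * (t - s))) * exp (2 * a * b * s) * ((γ s)⁻¹ * ‖f s‖ ^ 2) := by
        gcongr ν⁻¹ * ?_
        refine integral_mono_on hxt ((by fun_prop : Continuous _).intervalIntegrable _ _)
          ((by fun_prop : Continuous _).intervalIntegrable _ _) fun s hs => ?_
        exact mul_le_mul_of_nonneg_right (hweight s hs)
          (mul_nonneg (inv_pos.2 (hγ0 s)).le (sq_nonneg _))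
    _ = _ := by
        rw [div_eq_inv_mul, mul_assoc ν⁻¹, ← intervalIntegral.integral_const_mul (exp 17)]
        exact congrArg (ν⁻¹ * ·) (intervalIntegral.integral_congr fun s _ => by ring)

theorem exp_mul_norm_duhamel_le (hγ : Continuous γ) (hγ0 : ∀ s, 0 < γ s)
    (hγ₁ : ∀ s, HasDerivAt γ₁ (γ s) s)
    (hγ₁_growth : ∀ s t, s ≤ t → 3 * (t - s) ^ 3 ≤ γ₁ t - γ₁ s)
    (hν : 0 < ν) {a : ℝ} (ha4 : a ≤ 4) {f : ℝ → E} (hf : Continuous f) {T : ℝ}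
    (ht : t ∈ Icc x T) :
    exp (a * ν ^ ((1:ℝ)/3) * t) * ‖duhamel ν γ₁ x f t‖ ≤
      exp 17 * ν ^ (-(1:ℝ)/2) *
        (∫ s in x..T, exp (2 * a * ν ^ ((1:ℝ)/3) * s) * (γ s)⁻¹ * ‖f s‖ ^ 2) ^ ((1:ℝ)/2) := by
  set b := ν ^ ((1:ℝ)/3)
  have hb : 0 < b := rpow_pos_of_pos hν _
  set W := fun s => exp (2 * a * b * s) * (γ s)⁻¹ * ‖f s‖ ^ 2
  have hW : Continuous W :=
    ((continuous_const_mul _).rexp.mul (hγ.inv₀ fun s => (hγ0 s).ne')).mul (hf.norm.pow 2)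
  have hW0 : ∀ s, 0 ≤ W s := fun s => by have := (hγ0 s).le; positivity
  have hJ : ∫ s in x..t, exp (-(b * (t - s))) * W s ≤ ∫ s in x..T, W s := by
    refine (integral_mono_on ht.1 ((by fun_prop : Continuous _).intervalIntegrable _ _)
      (hW.intervalIntegrable _ _) fun s hs => ?_).trans
        (integral_mono_interval le_rfl ht.1 ht.2 (ae_of_all _ hW0) (hW.intervalIntegrable _ _))
    exact mul_le_of_le_one_left (hW0 s)
      (exp_le_one_iff.2 (neg_nonpos.2 (mul_nonneg hb.le (sub_nonneg.2 hs.2))))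
  have hsq : (exp (a * b * t) * ‖duhamel ν γ₁ x f t‖) ^ 2 ≤ exp 17 / ν * ∫ s in x..T, W s := by
    rw [mul_pow, ← exp_nat_mul, show ((2 : ℕ) : ℝ) * (a * b * t) = 2 * a * b * t by push_cast; ring]
    exact (exp_mul_sq_norm_duhamel_le hγ hγ0 hγ₁ hγ₁_growth hν ha4 hf ht.1).trans
      (mul_le_mul_of_nonneg_left hJ (by positivity))
  have hI0 : 0 ≤ ∫ s in x..T, W s := integral_nonneg (ht.1.trans ht.2) fun s _ => hW0 s
  calc exp (a * b * t) * ‖duhamel ν γ₁ x f t‖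
      ≤ (exp 17 / ν * ∫ s in x..T, W s) ^ ((1:ℝ)/2) := by
        rw [← sqrt_eq_rpow]
        exact le_sqrt_of_sq_le hsq
    _ = exp (17 / 2) * ν ^ (-(1:ℝ)/2) * (∫ s in x..T, W s) ^ ((1:ℝ)/2) := by
        rw [mul_rpow (by positivity) hI0, div_eq_mul_inv,
          mul_rpow (exp_pos _).le (inv_nonneg.2 hν.le), ← exp_mul, inv_rpow hν.le,
          ← rpow_neg hν.le]
        norm_num
    _ ≤ exp 17 * ν ^ (-(1:ℝ)/2) * (∫ s in x..T, W s) ^ ((1:ℝ)/2) := by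
        gcongr; norm_num

theorem integral_exp_mul_sq_norm_duhamel_le (hγ : Continuous γ) (hγ0 : ∀ s, 0 < γ s)
    (hγ₁ : ∀ s, HasDerivAt γ₁ (γ s) s)
    (hγ₁_growth : ∀ s t, s ≤ t → 3 * (t - s) ^ 3 ≤ γ₁ t - γ₁ s)
    (hν : 0 < ν) {a : ℝ} (ha4 : a ≤ 4) {f : ℝ → E} (hf : Continuous f) {T : ℝ}
    (hxT : x ≤ T) :
    ∫ t in x..T, exp (2 * a * ν ^ ((1:ℝ)/3) * t) * ‖duhamel ν γ₁ x f t‖ ^ 2 ≤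
      exp 17 * ν ^ (-(4:ℝ)/3) *
        ∫ s in x..T, exp (2 * a * ν ^ ((1:ℝ)/3) * s) * (γ s)⁻¹ * ‖f s‖ ^ 2 := by
  set b := ν ^ ((1:ℝ)/3)
  have hb : 0 < b := rpow_pos_of_pos hν _
  have hγ₁c : Continuous γ₁ := continuous_iff_continuousAt.2 fun s => (hγ₁ s).continuousAt
  set W := fun s => exp (2 * a * b * s) * (γ s)⁻¹ * ‖f s‖ ^ 2
  have hW : Continuous W :=
    ((continuous_const_mul _).rexp.mul (hγ.inv₀ fun s => (hγ0 s).ne')).mul (hf.norm.pow 2)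
  have hW0 : ∀ s, 0 ≤ W s := fun s => by have := (hγ0 s).le; positivity
  have hνb : ν⁻¹ * b⁻¹ = ν ^ (-(4:ℝ)/3) := by
    rw [← rpow_neg_one, ← rpow_neg hν.le, ← rpow_add hν]; norm_num
  have hF : Continuous fun t => exp (2 * a * b * t) * ‖duhamel ν γ₁ x f t‖ ^ 2 := by
    unfold duhamel; fun_prop
  calc ∫ t in x..T, exp (2 * a * b * t) * ‖duhamel ν γ₁ x f t‖ ^ 2
      ≤ ∫ t in x..T, exp 17 / ν * ∫ s in x..t, exp (-(b * (t - s))) * W s :=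
        integral_mono_on hxT (hF.intervalIntegrable _ _)
          ((by fun_prop : Continuous _).intervalIntegrable _ _) fun t ht =>
          exp_mul_sq_norm_duhamel_le hγ hγ0 hγ₁ hγ₁_growth hν ha4 hf ht.1
    _ ≤ exp 17 / ν * (b⁻¹ * ∫ s in x..T, W s) := by
        rw [intervalIntegral.integral_const_mul]
        gcongr
        exact integral_integral_exp_neg_mul_le hW hW0 hb hxT
    _ = exp 17 * ν ^ (-(4:ℝ)/3) * ∫ s in x..T, W s := by
        rw [← hνb]; ring

end Duhamel

/-- Fixed-frequency estimate for the Duhamel term driven by `f₃` (divergence-form forcing):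
with `γ(t) = (2π)²(k² + (η − k t)² + l²)`, `γ₁(t) = ∫₁^t γ(s) ds` and
`F₃(t) = ∫₁^t e^{−ν(γ₁(t)−γ₁(s))} f₃(s) ds`, one has
`sup_{t∈[1,T]} e^{aν^{1/3}t}|F₃(t)| ≤ C ν^{−1/2} ‖e^{aν^{1/3}s} γ^{−1/2} f₃‖_{L²(1,T)}` and
`‖e^{aν^{1/3}t}F₃‖²_{L²(1,T)} ≤ C ν^{−4/3} ‖e^{aν^{1/3}s} γ^{−1/2} f₃‖²_{L²(1,T)}`. -/
theorem stmt8 : ∃ C : ℝ, 0 < C ∧ ∀ (ν T a : ℝ) (k l : ℤ) (η : ℝ) (f₃ : ℝ → ℂ),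
    0 < ν → ν < 1 → 1 < T → 0 ≤ a → a ≤ 4 → k ≠ 0 →
    ContinuousOn f₃ (Set.Icc 1 T) →
    ∀ γ γ₁ : ℝ → ℝ,
    (∀ t, γ t = (2 * Real.pi) ^ 2 * ((k : ℝ) ^ 2 + (η - (k : ℝ) * t) ^ 2 + (l : ℝ) ^ 2)) →
    (∀ t, γ₁ t = ∫ s in (1:ℝ)..t, γ s) →
    ∀ F₃ : ℝ → ℂ,
    (∀ t, F₃ t = ∫ s in (1:ℝ)..t,
        (Real.exp (-(ν * (γ₁ t - γ₁ s))) : ℂ) * f₃ s) →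
    (∀ t ∈ Set.Icc (1:ℝ) T,
        Real.exp (a * ν ^ ((1:ℝ)/3) * t) * ‖F₃ t‖ ≤
          C * ν ^ (-(1:ℝ)/2) *
            (∫ s in (1:ℝ)..T,
              Real.exp (2 * a * ν ^ ((1:ℝ)/3) * s) * (γ s)⁻¹ * ‖f₃ s‖ ^ 2) ^ ((1:ℝ)/2)) ∧
    (∫ t in (1:ℝ)..T, Real.exp (2 * a * ν ^ ((1:ℝ)/3) * t) * ‖F₃ t‖ ^ 2) ≤
        C * ν ^ (-(4:ℝ)/3) *
          ∫ s in (1:ℝ)..T, Real.exp (2 * a * ν ^ ((1:ℝ)/3) * s) * (γ s)⁻¹ * ‖f₃ s‖ ^ 2 := by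
  refine ⟨exp 17, exp_pos 17, ?_⟩
  intro ν T a k l η f₃ hν _ hT _ ha4 hk hf₃ γ γ₁ hγ hγ₁ F₃ hF₃
  have hk1 : (1 : ℝ) ≤ (k : ℝ) ^ 2 :=
    (one_le_sq_iff_one_le_abs _).2 (by exact_mod_cast Int.one_le_abs hk)
  have hγc : Continuous γ := by rw [show γ = _ from funext hγ]; fun_prop
  have hγ0 : ∀ s, 0 < γ s := fun s => by
    rw [hγ]
    exact mul_pos (by positivity) (by nlinarith [sq_nonneg (η - k * s), sq_nonneg (l : ℝ)])
  have hγ₁' : ∀ s, HasDerivAt γ₁ (γ s) s := fun s => by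
    rw [show γ₁ = _ from funext hγ₁]; exact (hγc.integral_hasStrictDerivAt 1 s).hasDerivAt
  have hgrowth : ∀ s t, s ≤ t → 3 * (t - s) ^ 3 ≤ γ₁ t - γ₁ s := fun s t hst => by
    rw [hγ₁, hγ₁,
      integral_interval_sub_left (hγc.intervalIntegrable _ _) (hγc.intervalIntegrable _ _)]
    simp only [hγ]
    exact three_mul_cube_le_integral_s8 hk1 η l hst
  set g := IccExtend hT.le ((Icc 1 T).domRestrict f₃)
  have hg : Continuous g := continuous_IccExtend_iff.2 hf₃.domRestrict
  have hgf : ∀ s ∈ Icc 1 T, g s = f₃ s := fun s hs => IccExtend_of_mem _ _ hs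
  have hF : ∀ t ∈ Icc 1 T, F₃ t = duhamel ν γ₁ 1 g t := fun t ht => by
    rw [hF₃, duhamel]
    refine intervalIntegral.integral_congr fun s hs => ?_
    rw [uIcc_of_le ht.1] at hs
    simp only [hgf s ⟨hs.1, hs.2.trans ht.2⟩, Complex.real_smul]
  have hI : ∫ s in (1:ℝ)..T, exp (2 * a * ν ^ ((1:ℝ)/3) * s) * (γ s)⁻¹ * ‖f₃ s‖ ^ 2 =
      ∫ s in (1:ℝ)..T, exp (2 * a * ν ^ ((1:ℝ)/3) * s) * (γ s)⁻¹ * ‖g s‖ ^ 2 :=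
    intervalIntegral.integral_congr fun s hs => by
      rw [uIcc_of_le hT.le] at hs; simp only [hgf s hs]
  refine ⟨fun t ht => ?_, ?_⟩
  · rw [hF t ht, hI]
    exact exp_mul_norm_duhamel_le hγc hγ0 hγ₁' hgrowth hν ha4 hg ht
  · rw [hI, intervalIntegral.integral_congr fun t ht => by
      rw [hF t (by rwa [uIcc_of_le hT.le] at ht)]]
    exact integral_exp_mul_sq_norm_duhamel_le hγc hγ0 hγ₁' hgrowth hν ha4 hg hT.le
end

section
/- There exists a constant C > 0 with the following property. Let f : [1,T] → ℂ be continuously differentiable and let f₁, f₂, f₃ : [1,T] → ℂ be continuous, with f'(t) + ν γ(t) f(t) = 2π i k f₁(t) + f₂(t) + f₃(t) for all t ∈ [1,T]. Then sup_{t∈[1,T]} e^{2aν^{1/3}t}|f(t)|² + ∫₁^T e^{2aν^{1/3}t} (2π k)² γ(t)^{−1} |f(t)|² dt + ν ∫₁^T e^{2aν^{1/3}t} γ(t) |f(t)|² dt + ν^{1/3} ∫₁^T e^{2aν^{1/3}t} |f(t)|² dt ≤ C ( |f(1)|² + |k|(k²+l²)^{−1/2} ∫₁^T e^{2aν^{1/3}t}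 γ(t) |f₁(t)|² dt + ν^{−1/3} ∫₁^T e^{2aν^{1/3}t} |f₂(t)|² dt + ν^{−1} ∫₁^T e^{2aν^{1/3}t} γ(t)^{−1} |f₃(t)|² dt ). The constant C is independent of ν, T, a, k, l, η and of f, f₁, f₂, f₃. -/
/-!
Energy method with two ghost weights. For `E(t) = e^{2aν^{1/3}t}‖f(t)‖²`, Young's inequality on
the three forcing terms, together with the two weight inequalities below, gives
`E' + D ≤ (P₁ + P₂) E + 2 F`, where `D` is half the integrand of the left-hand side and `F` the
integrand of the right-hand side. With `t₀ = η/k` (where `γ` is smallest)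
and `c = |k|/√(k² + l²)`, the weights are the Lorentzians
`P₁ = 18ν^{1/3}/(1 + (2π|k|ν^{1/3}(t - t₀)/3)²)` and `P₂ = c/(1 + c²(t - t₀)²)`.
Their time integrals are at most `27/|k|` and `π`, whatever `T`, `ν`, `a`, `k`, `l`, `η`.
`P₁` pays for the enhanced-dissipation term: `9ν^{1/3} ≤ P₁ + νγ`, because
`νγ ≥ 4π²k²ν(t - t₀)²`. `P₂` pays for the inviscid-damping term and absorbs the `f₁` forcing,
because `(2πk)² = c P₂ γ`. Gronwall's lemma then bounds `sup E`, and integrating the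
differential inequality bounds `∫ D`.
-/

open Set MeasureTheory intervalIntegral Real

theorem integral_div_one_add_sq_le {b c : ℝ} (hb : 0 < b) (hc : 0 ≤ c) (t₀ x y : ℝ) :
    ∫ σ in x..y, c / (1 + (b * (σ - t₀)) ^ 2) ≤ c / b * π := by
  have hderiv (σ : ℝ) : HasDerivAt (fun τ => c / b * arctan (b * (τ - t₀)))
      (c / (1 + (b * (σ - t₀)) ^ 2)) σ := by
    have := (((hasDerivAt_id σ).sub_const t₀).const_mul b).arctan.const_mul (c / b)
    refine this.congr_deriv ?_
    simp only [id]
    field_simp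
  have hcont : Continuous fun σ => c / (1 + (b * (σ - t₀)) ^ 2) :=
    continuous_const.div (by fun_prop) fun σ => by positivity
  rw [integral_eq_sub_of_hasDerivAt (fun σ _ => hderiv σ) (hcont.intervalIntegrable x y)]
  have := arctan_lt_pi_div_two (b * (y - t₀))
  have := neg_pi_div_two_lt_arctan (b * (x - t₀))
  have : 0 ≤ c / b := div_nonneg hc hb.le
  nlinarith

theorem le_exp_integral_mul_add_integral_of_hasDerivWithinAt {a b : ℝ} {E e P h : ℝ → ℝ}
    (hab : a ≤ b) (hE : ∀ x ∈ Icc a b, HasDerivWithinAt E (e x) (Icc a b) x)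
    (hP : ContinuousOn P (Icc a b)) (hP0 : ∀ x ∈ Icc a b, 0 ≤ P x)
    (hh : ContinuousOn h (Icc a b)) (hh0 : ∀ x ∈ Icc a b, 0 ≤ h x)
    (hineq : ∀ x ∈ Icc a b, e x ≤ P x * E x + h x) :
    E b ≤ exp (∫ x in a..b, P x) * (E a + ∫ x in a..b, h x) := by
  set Q : ℝ → ℝ := fun τ => ∫ x in a..τ, P x
  have hQ : ContinuousOn Q (Icc a b) := by
    simpa [uIcc_of_le hab] using continuousOn_primitive_interval (a := a) (b := b)
      (μ := volume) (by simpa [uIcc_of_le hab] using hP.integrableOn_Icc)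
  have hQ' (x) (hx : x ∈ Ioo a b) : HasDerivAt Q (P x) x :=
    integral_hasDerivAt_right
      ((hP.mono (Icc_subset_Icc le_rfl hx.2.le)).intervalIntegrable_of_Icc hx.1.le)
      ((hP.mono Ioo_subset_Icc_self).stronglyMeasurableAtFilter isOpen_Ioo x hx)
      (hP.continuousAt (Icc_mem_nhds hx.1 hx.2))
  have hQ0 (x) (hx : x ∈ Icc a b) : 0 ≤ Q x :=
    integral_nonneg hx.1 fun y hy => hP0 y ⟨hy.1, hy.2.trans hx.2⟩
  have hfactor : exp (-Q b) * E b - exp (-Q a) * E a ≤ ∫ x in a..b, h x := by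
    refine sub_le_integral_of_hasDeriv_right_of_le hab
      (hQ.neg.rexp.mul fun x hx => (hE x hx).continuousWithinAt) (fun x hx => ?_)
      hh.integrableOn_Icc (g' := fun x => exp (-Q x) * (e x - P x * E x)) fun x hx => ?_
    · have := (hQ' x hx).neg.exp.mul ((hE x (Ioo_subset_Icc_self hx)).hasDerivAt
        (Icc_mem_nhds hx.1 hx.2))
      refine (this.congr_deriv ?_).hasDerivWithinAt
      simp only [Pi.neg_apply]
      ring
    · have hx' := Ioo_subset_Icc_self hx
      have h1 : exp (-Q x) ≤ 1 := exp_le_one_iff.2 (neg_nonpos.2 (hQ0 x hx'))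
      have h2 : e x - P x * E x ≤ h x := by linarith [hineq x hx']
      nlinarith [exp_pos (-Q x), hh0 x hx']
  rw [show Q a = 0 from integral_same, neg_zero, exp_zero, one_mul] at hfactor
  calc E b = exp (Q b) * (exp (-Q b) * E b) := by rw [← mul_assoc, ← exp_add]; simp
    _ ≤ exp (Q b) * (E a + ∫ x in a..b, h x) := by gcongr; linarith

theorem le_exp_mul_add_integral_of_hasDerivWithinAt {a b B : ℝ} {E e P h : ℝ → ℝ}
    (hE : ∀ x ∈ Icc a b, HasDerivWithinAt E (e x) (Icc a b) x) (hEa : 0 ≤ E a)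
    (hP : ContinuousOn P (Icc a b)) (hP0 : ∀ x ∈ Icc a b, 0 ≤ P x)
    (hPB : ∫ x in a..b, P x ≤ B)
    (hh : ContinuousOn h (Icc a b)) (hh0 : ∀ x ∈ Icc a b, 0 ≤ h x)
    (hineq : ∀ x ∈ Icc a b, e x ≤ P x * E x + h x) :
    ∀ t ∈ Icc a b, E t ≤ exp B * (E a + ∫ x in a..b, h x) := by
  intro t ⟨hat, htb⟩
  have hab := hat.trans htb
  have hsub : Icc a t ⊆ Icc a b := Icc_subset_Icc le_rfl htb
  have hmono {φ : ℝ → ℝ} (hφ : ContinuousOn φ (Icc a b)) (hφ0 : ∀ x ∈ Icc a b, 0 ≤ φ x) :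
      ∫ x in a..t, φ x ≤ ∫ x in a..b, φ x :=
    integral_mono_interval le_rfl hat htb
      ((ae_restrict_iff' measurableSet_Ioc).2
        (.of_forall fun x hx => hφ0 x (Ioc_subset_Icc_self hx)))
      (hφ.intervalIntegrable_of_Icc hab)
  calc E t ≤ exp (∫ x in a..t, P x) * (E a + ∫ x in a..t, h x) :=
        le_exp_integral_mul_add_integral_of_hasDerivWithinAt hat
          (fun x hx => (hE x (hsub hx)).mono hsub) (hP.mono hsub) (fun x hx => hP0 x (hsub hx))
          (hh.mono hsub) (fun x hx => hh0 x (hsub hx)) fun x hx => hineq x (hsub hx)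
    _ ≤ exp B * (E a + ∫ x in a..b, h x) := by
      gcongr
      · exact add_nonneg hEa (integral_nonneg hat fun x hx => hh0 x (hsub hx))
      · exact (hmono hP hP0).trans hPB
      · exact hmono hh hh0

theorem integral_le_add_integral_of_hasDerivWithinAt {a b : ℝ} {E e D φ : ℝ → ℝ} (hab : a ≤ b)
    (hE : ∀ x ∈ Icc a b, HasDerivWithinAt E (e x) (Icc a b) x) (hEb : 0 ≤ E b)
    (hD : ContinuousOn D (Icc a b)) (hφ : ContinuousOn φ (Icc a b))
    (hineq : ∀ x ∈ Icc a b, e x + D x ≤ φ x) :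
    ∫ x in a..b, D x ≤ E a + ∫ x in a..b, φ x := by
  have := sub_le_integral_of_hasDeriv_right_of_le (φ := fun x => φ x - D x) hab
    (fun x hx => (hE x hx).continuousWithinAt)
    (fun x hx =>
      ((hE x (Ioo_subset_Icc_self hx)).hasDerivAt (Icc_mem_nhds hx.1 hx.2)).hasDerivWithinAt)
    (hφ.sub hD).integrableOn_Icc
    fun x hx => le_sub_iff_add_le.2 (hineq x (Ioo_subset_Icc_self hx))
  rw [integral_sub (hφ.intervalIntegrable_of_Icc hab) (hD.intervalIntegrable_of_Icc hab)] at this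
  linarith

theorem add_integral_le_of_hasDerivWithinAt {a b B : ℝ} {E e P D h : ℝ → ℝ}
    (hE : ∀ x ∈ Icc a b, HasDerivWithinAt E (e x) (Icc a b) x) (hE0 : ∀ x ∈ Icc a b, 0 ≤ E x)
    (hP : ContinuousOn P (Icc a b)) (hP0 : ∀ x ∈ Icc a b, 0 ≤ P x)
    (hPB : ∫ x in a..b, P x ≤ B)
    (hD : ContinuousOn D (Icc a b)) (hD0 : ∀ x ∈ Icc a b, 0 ≤ D x)
    (hh : ContinuousOn h (Icc a b)) (hh0 : ∀ x ∈ Icc a b, 0 ≤ h x)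
    (hineq : ∀ x ∈ Icc a b, e x + D x ≤ P x * E x + h x) :
    ∀ t ∈ Icc a b, E t + ∫ x in a..b, D x ≤ (2 + B) * exp B * (E a + ∫ x in a..b, h x) := by
  intro t ht
  have hab : a ≤ b := ht.1.trans ht.2
  have hEc : ContinuousOn E (Icc a b) := fun x hx => (hE x hx).continuousWithinAt
  set M := exp B * (E a + ∫ x in a..b, h x)
  have hsup := le_exp_mul_add_integral_of_hasDerivWithinAt hE (hE0 a ⟨le_rfl, hab⟩) hP hP0 hPB hh
    hh0 fun x hx => by linarith [hineq x hx, hD0 x hx]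
  have hB : 0 ≤ B := (integral_nonneg hab hP0).trans hPB
  have hM : E a + ∫ x in a..b, h x ≤ M :=
    le_mul_of_one_le_left (add_nonneg (hE0 a ⟨le_rfl, hab⟩) (integral_nonneg hab hh0))
      (one_le_exp hB)
  have hPE : ∫ x in a..b, P x * E x ≤ B * M := by
    calc ∫ x in a..b, P x * E x ≤ ∫ x in a..b, P x * M :=
          integral_mono_on hab ((hP.mul hEc).intervalIntegrable_of_Icc hab)
            ((hP.mul continuousOn_const).intervalIntegrable_of_Icc hab)
            fun x hx => mul_le_mul_of_nonneg_left (hsup x hx) (hP0 x hx)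
      _ = (∫ x in a..b, P x) * M := integral_mul_const _ _
      _ ≤ B * M := mul_le_mul_of_nonneg_right hPB ((hE0 t ht).trans (hsup t ht))
  have hdiss := integral_le_add_integral_of_hasDerivWithinAt (φ := fun x => P x * E x + h x)
    hab hE (hE0 b ⟨hab, le_rfl⟩) hD ((hP.mul hEc).add hh) hineq
  rw [integral_add (f := fun x => P x * E x) ((hP.mul hEc).intervalIntegrable_of_Icc hab)
    (hh.intervalIntegrable_of_Icc hab)] at hdiss
  have hC : (2 + B) * exp B * (E a + ∫ x in a..b, h x) = 2 * M + B * M := by ring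
  linarith [hsup t ht]

theorem integral_const_mul_add_const_mul_add_const_mul {a b : ℝ} {g₁ g₂ g₃ : ℝ → ℝ}
    (c₁ c₂ c₃ : ℝ) (h₁ : IntervalIntegrable g₁ volume a b) (h₂ : IntervalIntegrable g₂ volume a b)
    (h₃ : IntervalIntegrable g₃ volume a b) :
    ∫ x in a..b, (c₁ * g₁ x + c₂ * g₂ x + c₃ * g₃ x) =
      c₁ * (∫ x in a..b, g₁ x) + c₂ * (∫ x in a..b, g₂ x) + c₃ * ∫ x in a..b, g₃ x := by
  rw [integral_add ((h₁.const_mul c₁).add (h₂.const_mul c₂)) (h₃.const_mul c₃),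
    integral_add (h₁.const_mul c₁) (h₂.const_mul c₂), intervalIntegral.integral_const_mul,
    intervalIntegral.integral_const_mul, intervalIntegral.integral_const_mul]

theorem hasDerivWithinAt_exp_mul_norm_sq {F : Type*} [NormedAddCommGroup F]
    [InnerProductSpace ℝ F] {f : ℝ → F} {f' : F} {s : Set ℝ} {x : ℝ}
    (hf : HasDerivWithinAt f f' s x) (r : ℝ) :
    HasDerivWithinAt (fun τ => exp (r * τ) * ‖f τ‖ ^ 2)
      (exp (r * x) * (r * ‖f x‖ ^ 2 + 2 * inner ℝ (f x) f')) s x := by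
  have hexp : HasDerivAt (fun τ => exp (r * τ)) (exp (r * x) * r) x := by
    simpa using ((hasDerivAt_id x).const_mul r).exp
  have hnorm := hf.inner ℝ hf
  simp only [real_inner_self_eq_norm_sq, real_inner_comm (f x) f'] at hnorm
  exact (hexp.hasDerivWithinAt.mul hnorm).congr_deriv (by ring)

theorem two_mul_le_mul_sq_add_inv_mul_sq {α : ℝ} (hα : 0 < α) (x y : ℝ) :
    2 * x * y ≤ α * x ^ 2 + α⁻¹ * y ^ 2 := by
  have : α * x ^ 2 + α⁻¹ * y ^ 2 - 2 * x * y = α⁻¹ * (α * x - y) ^ 2 := by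
    field_simp
    ring
  nlinarith [mul_nonneg (inv_nonneg.2 hα.le) (sq_nonneg (α * x - y))]

theorem le_two_mul_div_one_add_add_mul {r X : ℝ} (hr : 0 ≤ r) (hX : 0 ≤ X) :
    r ≤ 2 * r / (1 + X) + r * X := by
  rw [div_add' _ _ _ (by positivity), le_div_iff₀ (by positivity)]
  nlinarith [mul_nonneg hr (sq_nonneg X)]

theorem inner_sub_ofReal_mul_le (z w₁ w₂ w₃ K : ℂ) (r : ℝ) :
    inner ℝ z (K * w₁ + w₂ + w₃ - r * z) ≤
      ‖z‖ * (‖K‖ * ‖w₁‖ + ‖w₂‖ + ‖w₃‖) - r * ‖z‖ ^ 2 := by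
  have hr : (r : ℂ) * z = r • z := rfl
  rw [hr, inner_sub_right, real_inner_smul_right, real_inner_self_eq_norm_sq, inner_add_right,
    inner_add_right]
  have h₁ := real_inner_le_norm z (K * w₁)
  have h₂ := real_inner_le_norm z w₂
  have h₃ := real_inner_le_norm z w₃
  rw [norm_mul] at h₁
  nlinarith

theorem energy_rate_le {a u ν g c P₁ P₂ : ℝ} {K z w₁ w₂ w₃ : ℂ} (ha : a ≤ 4) (hu : 0 < u)
    (hν : 0 < ν) (hg : 0 < g) (hP₂ : 0 < P₂) (hc : c ≤ 1) (hP₁ : 9 * u ≤ P₁ + ν * g)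
    (hK : ‖K‖ ^ 2 = P₂ * c * g) :
    2 * a * u * ‖z‖ ^ 2 + 2 * inner ℝ z (K * w₁ + w₂ + w₃ - (ν * g : ℝ) * z)
        + (‖K‖ ^ 2 / g + ν * g + u) / 2 * ‖z‖ ^ 2
      ≤ (P₁ + P₂) * ‖z‖ ^ 2
        + 2 * (c * g * ‖w₁‖ ^ 2 + u⁻¹ * ‖w₂‖ ^ 2 + ν⁻¹ * g⁻¹ * ‖w₃‖ ^ 2) := by
  have hinner := inner_sub_ofReal_mul_le z w₁ w₂ w₃ K (ν * g)
  have h₁ := two_mul_le_mul_sq_add_inv_mul_sq (half_pos hP₂) ‖z‖ (‖K‖ * ‖w₁‖)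
  have h₂ := two_mul_le_mul_sq_add_inv_mul_sq (half_pos hu) ‖z‖ ‖w₂‖
  have h₃ := two_mul_le_mul_sq_add_inv_mul_sq (half_pos (mul_pos hν hg)) ‖z‖ ‖w₃‖
  have e₁ : (P₂ / 2)⁻¹ * (‖K‖ * ‖w₁‖) ^ 2 = 2 * (c * g * ‖w₁‖ ^ 2) := by
    rw [mul_pow, hK]; field_simp
  have e₂ : (u / 2)⁻¹ = 2 * u⁻¹ := by field_simp
  have e₃ : (ν * g / 2)⁻¹ = 2 * (ν⁻¹ * g⁻¹) := by field_simp
  have e₄ : ‖K‖ ^ 2 / g = P₂ * c := by rw [hK]; field_simp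
  rw [e₁] at h₁
  rw [e₂] at h₂
  rw [e₃] at h₃
  rw [e₄]
  have hz := sq_nonneg ‖z‖
  have i₁ : a * u * ‖z‖ ^ 2 ≤ 4 * u * ‖z‖ ^ 2 := by gcongr
  have i₂ : P₂ * c * ‖z‖ ^ 2 ≤ P₂ * ‖z‖ ^ 2 := by gcongr; exact mul_le_of_le_one_right hP₂.le hc
  have i₃ : 9 * u * ‖z‖ ^ 2 ≤ (P₁ + ν * g) * ‖z‖ ^ 2 := by gcongr
  linear_combination 2 * hinner + h₁ + h₂ + h₃ + 2 * i₁ + i₂ / 2 + i₃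

noncomputable section

def dampingRate (k l : ℝ) : ℝ := |k| / √(k ^ 2 + l ^ 2)

def dampingWeight (k l η σ : ℝ) : ℝ :=
  dampingRate k l / (1 + (dampingRate k l * (σ - η / k)) ^ 2)

def dissipationWeight (u k η σ : ℝ) : ℝ :=
  18 * u / (1 + (2 * π / 3 * |k| * u * (σ - η / k)) ^ 2)

end

theorem dampingRate_pos {k : ℝ} (l : ℝ) (hk : k ≠ 0) : 0 < dampingRate k l := by
  unfold dampingRate; positivity

theorem dampingRate_le_one (k l : ℝ) : dampingRate k l ≤ 1 := by
  unfold dampingRate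
  refine div_le_one_of_le₀ ?_ (sqrt_nonneg _)
  rw [← sqrt_sq_eq_abs]
  exact sqrt_le_sqrt (by nlinarith)

theorem dampingRate_eq_mul_rpow (k l : ℝ) :
    dampingRate k l = |k| * (k ^ 2 + l ^ 2) ^ (-(1 : ℝ) / 2) := by
  rw [dampingRate, sqrt_eq_rpow, neg_div, rpow_neg (by positivity), div_eq_mul_inv]

theorem continuous_dampingWeight (k l η : ℝ) : Continuous (dampingWeight k l η) :=
  continuous_const.div (by fun_prop) fun σ => by positivity

theorem continuous_dissipationWeight (u k η : ℝ) : Continuous (dissipationWeight u k η) :=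
  continuous_const.div (by fun_prop) fun σ => by positivity

theorem dissipationWeight_nonneg {u : ℝ} (hu : 0 ≤ u) (k η σ : ℝ) :
    0 ≤ dissipationWeight u k η σ := by
  unfold dissipationWeight; positivity

theorem dampingWeight_pos {k : ℝ} (l : ℝ) (hk : k ≠ 0) (η σ : ℝ) :
    0 < dampingWeight k l η σ := by
  have := dampingRate_pos l hk
  unfold dampingWeight; positivity

theorem sq_two_pi_mul_eq_dampingWeight_mul {k : ℝ} (l : ℝ) (hk : k ≠ 0) (η σ : ℝ) :
    (2 * π * k) ^ 2 = dampingWeight k l η σ * dampingRate k l *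
      ((2 * π) ^ 2 * (k ^ 2 + (η - k * σ) ^ 2 + l ^ 2)) := by
  have hL : 0 < k ^ 2 + l ^ 2 := by positivity
  have hc : dampingRate k l ^ 2 * (k ^ 2 + l ^ 2) = k ^ 2 := by
    rw [dampingRate, div_pow, sq_abs, sq_sqrt hL.le, div_mul_cancel₀ _ hL.ne']
  have e : (η - k * σ) ^ 2 = k ^ 2 * (σ - η / k) ^ 2 := by field_simp; ring
  unfold dampingWeight
  have h1 : 0 < 1 + (dampingRate k l * (σ - η / k)) ^ 2 := by positivity
  rw [div_mul_eq_mul_div, div_mul_eq_mul_div, eq_div_iff h1.ne', e]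
  linear_combination (-(2 * π) ^ 2) * hc

theorem nine_mul_le_dissipationWeight_add {u k : ℝ} (l : ℝ) (hu : 0 ≤ u) (hk : k ≠ 0)
    (η σ : ℝ) :
    9 * u ≤ dissipationWeight u k η σ +
      u ^ 3 * ((2 * π) ^ 2 * (k ^ 2 + (η - k * σ) ^ 2 + l ^ 2)) := by
  have hX := le_two_mul_div_one_add_add_mul (mul_nonneg (by norm_num : (0 : ℝ) ≤ 9) hu)
    (sq_nonneg (2 * π / 3 * |k| * u * (σ - η / k)))
  set X := (2 * π / 3 * |k| * u * (σ - η / k)) ^ 2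
  have e : (η - k * σ) ^ 2 = (|k| * (σ - η / k)) ^ 2 := by
    rw [mul_pow, sq_abs]; field_simp; ring
  have hsplit : dissipationWeight u k η σ +
      u ^ 3 * ((2 * π) ^ 2 * (k ^ 2 + (η - k * σ) ^ 2 + l ^ 2)) =
      2 * (9 * u) / (1 + X) + 9 * u * X + u ^ 3 * (2 * π) ^ 2 * (k ^ 2 + l ^ 2) := by
    unfold dissipationWeight; rw [e]; ring
  have : 0 ≤ u ^ 3 * (2 * π) ^ 2 * (k ^ 2 + l ^ 2) := by positivity
  linarith

theorem integral_dampingWeight_le {k : ℝ} (l : ℝ) (hk : k ≠ 0) (η x y : ℝ) :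
    ∫ σ in x..y, dampingWeight k l η σ ≤ π := by
  have hc := dampingRate_pos l hk
  have := integral_div_one_add_sq_le hc hc.le (η / k) x y
  rwa [div_self hc.ne', one_mul] at this

theorem integral_dissipationWeight_le {u k : ℝ} (hu : 0 < u) (hk : 1 ≤ |k|) (η x y : ℝ) :
    ∫ σ in x..y, dissipationWeight u k η σ ≤ 27 := by
  have hb : 0 < 2 * π / 3 * |k| * u := by positivity
  have h := integral_div_one_add_sq_le hb (by positivity : 0 ≤ 18 * u) (η / k) x y
  have hk0 : (0 : ℝ) < |k| := by linarith
  calc ∫ σ in x..y, dissipationWeight u k η σ ≤ 18 * u / (2 * π / 3 * |k| * u) * π := h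
    _ = 27 / |k| := by field_simp; ring
    _ ≤ 27 := div_le_self (by norm_num) hk

theorem integral_dissipationWeight_add_dampingWeight_le {u : ℝ} {k : ℤ} (l : ℝ) (hu : 0 < u)
    (hk : k ≠ 0) (η x y : ℝ) :
    ∫ σ in x..y, (dissipationWeight u k η σ + dampingWeight k l η σ) ≤ 31 := by
  have hk1 : 1 ≤ |(k : ℝ)| := by rw [← Int.cast_abs]; exact_mod_cast Int.one_le_abs hk
  rw [integral_add ((continuous_dissipationWeight u k η).intervalIntegrable _ _)
    ((continuous_dampingWeight k l η).intervalIntegrable _ _)]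
  linarith [integral_dissipationWeight_le hu hk1 η x y,
    integral_dampingWeight_le l (Int.cast_ne_zero.2 hk) η x y, pi_le_four]

theorem weighted_energy_estimate {ν u a t₁ t₂ η l : ℝ} {k : ℤ} {γ : ℝ → ℝ}
    {f f₁ f₂ f₃ : ℝ → ℂ} (hu : 0 < u) (hν : u ^ 3 = ν) (ha : a ≤ 4) (hk : k ≠ 0)
    (hγ : ∀ t, γ t = (2 * π) ^ 2 * ((k : ℝ) ^ 2 + (η - k * t) ^ 2 + l ^ 2))
    (hf₁ : ContinuousOn f₁ (Icc t₁ t₂)) (hf₂ : ContinuousOn f₂ (Icc t₁ t₂))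
    (hf₃ : ContinuousOn f₃ (Icc t₁ t₂))
    (hf : ∀ t ∈ Icc t₁ t₂, HasDerivWithinAt f
        (2 * (π : ℂ) * Complex.I * (k : ℂ) * f₁ t + f₂ t + f₃ t - (ν : ℂ) * (γ t : ℂ) * f t)
        (Icc t₁ t₂) t) :
    ∀ t ∈ Icc t₁ t₂, exp (2 * a * u * t) * ‖f t‖ ^ 2
        + (∫ s in t₁..t₂, exp (2 * a * u * s) * (2 * π * k) ^ 2 * (γ s)⁻¹ * ‖f s‖ ^ 2)
        + ν * (∫ s in t₁..t₂, exp (2 * a * u * s) * γ s * ‖f s‖ ^ 2)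
        + u * (∫ s in t₁..t₂, exp (2 * a * u * s) * ‖f s‖ ^ 2)
      ≤ 66 * exp 31 * (exp (2 * a * u * t₁) * ‖f t₁‖ ^ 2
        + 2 * (dampingRate k l * (∫ s in t₁..t₂, exp (2 * a * u * s) * γ s * ‖f₁ s‖ ^ 2)
          + u⁻¹ * (∫ s in t₁..t₂, exp (2 * a * u * s) * ‖f₂ s‖ ^ 2)
          + ν⁻¹ * (∫ s in t₁..t₂, exp (2 * a * u * s) * (γ s)⁻¹ * ‖f₃ s‖ ^ 2))) := by
  intro t ht
  have hab : t₁ ≤ t₂ := ht.1.trans ht.2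
  have hk' : (k : ℝ) ≠ 0 := Int.cast_ne_zero.2 hk
  have hν0 : 0 < ν := hν ▸ pow_pos hu 3
  have hγ0 (σ : ℝ) : 0 < γ σ := by rw [hγ]; positivity
  have hγc : Continuous γ := by rw [funext hγ]; fun_prop
  have hγc' : Continuous fun σ => (γ σ)⁻¹ := hγc.inv₀ fun σ => (hγ0 σ).ne'
  have hfc : ContinuousOn f (Icc t₁ t₂) := fun σ hσ => (hf σ hσ).continuousWithinAt
  have key := add_integral_le_of_hasDerivWithinAt
    (P := fun σ => dissipationWeight u k η σ + dampingWeight k l η σ)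
    (fun σ hσ => hasDerivWithinAt_exp_mul_norm_sq (hf σ hσ) (2 * a * u))
    (fun σ _ => by positivity)
    ((continuous_dissipationWeight u k η).add (continuous_dampingWeight k l η)).continuousOn
    (fun σ _ => add_nonneg (dissipationWeight_nonneg hu.le k η σ)
      (dampingWeight_pos l hk' η σ).le)
    (integral_dissipationWeight_add_dampingWeight_le l hu hk η t₁ t₂)
    (D := fun σ => 1 / 2 * (exp (2 * a * u * σ) * (2 * π * k) ^ 2 * (γ σ)⁻¹ * ‖f σ‖ ^ 2)
      + ν / 2 * (exp (2 * a * u * σ) * γ σ * ‖f σ‖ ^ 2) + u / 2 * (exp (2 * a * u * σ) * ‖f σ‖ ^ 2))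
    (by fun_prop) (fun σ _ => by have := hγ0 σ; positivity)
    (h := fun σ => 2 * dampingRate k l * (exp (2 * a * u * σ) * γ σ * ‖f₁ σ‖ ^ 2)
      + 2 * u⁻¹ * (exp (2 * a * u * σ) * ‖f₂ σ‖ ^ 2)
      + 2 * ν⁻¹ * (exp (2 * a * u * σ) * (γ σ)⁻¹ * ‖f₃ σ‖ ^ 2))
    (by fun_prop) (fun σ _ => by have := hγ0 σ; have := dampingRate_pos l hk'; positivity)
    (fun σ hσ => ?_) t ht
  · rw [integral_const_mul_add_const_mul_add_const_mul,
      integral_const_mul_add_const_mul_add_const_mul] at key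
    · have : 0 ≤ exp (2 * a * u * t) * ‖f t‖ ^ 2 := by positivity
      linarith
    all_goals exact ContinuousOn.intervalIntegrable_of_Icc hab (by fun_prop)
  have hK : ‖2 * (π : ℂ) * Complex.I * (k : ℂ)‖ ^ 2 = (2 * π * k) ^ 2 := by simp [mul_pow]
  have hrate := energy_rate_le (z := f σ) (w₁ := f₁ σ) (w₂ := f₂ σ) (w₃ := f₃ σ)
    ha hu hν0 (hγ0 σ) (dampingWeight_pos l hk' η σ) (dampingRate_le_one k l)
    (by rw [← hν, hγ σ]; exact nine_mul_le_dissipationWeight_add l hu.le hk' η σ)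
    (by rw [hK, hγ σ]; exact sq_two_pi_mul_eq_dampingWeight_mul l hk' η σ)
  have hF : (ν : ℂ) * (γ σ : ℂ) * f σ = ((ν * γ σ : ℝ) : ℂ) * f σ := by push_cast; ring
  rw [hK, ← hF] at hrate
  linear_combination (exp (2 * a * u * σ)) * hrate

/-- Fixed-frequency space-time estimate combining enhanced dissipation and inviscid
damping, for solutions of `f'(t) + ν γ(t) f(t) = 2πik f₁(t) + f₂(t) + f₃(t)` on `[1,T]`,
where `γ(t) = (2π)²(k² + (η − k t)² + l²)`. -/
theorem stmt9 : ∃ C : ℝ, 0 < C ∧ ∀ (ν T a : ℝ) (k l : ℤ) (η : ℝ)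
    (f f₁ f₂ f₃ : ℝ → ℂ),
    0 < ν → ν < 1 → 1 < T → 0 ≤ a → a ≤ 4 → k ≠ 0 →
    ContinuousOn f₁ (Set.Icc 1 T) → ContinuousOn f₂ (Set.Icc 1 T) →
    ContinuousOn f₃ (Set.Icc 1 T) →
    ∀ γ : ℝ → ℝ,
    (∀ t, γ t = (2 * Real.pi) ^ 2 * ((k : ℝ) ^ 2 + (η - (k : ℝ) * t) ^ 2 + (l : ℝ) ^ 2)) →
    (∀ t ∈ Set.Icc (1:ℝ) T, HasDerivWithinAt f
        (2 * (Real.pi : ℂ) * Complex.I * (k : ℂ) * f₁ t + f₂ t + f₃ t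
          - (ν : ℂ) * (γ t : ℂ) * f t) (Set.Icc (1:ℝ) T) t) →
    ∀ t ∈ Set.Icc (1:ℝ) T,
      Real.exp (2 * a * ν ^ ((1:ℝ)/3) * t) * ‖f t‖ ^ 2
      + (∫ s in (1:ℝ)..T, Real.exp (2 * a * ν ^ ((1:ℝ)/3) * s)
            * (2 * Real.pi * (k : ℝ)) ^ 2 * (γ s)⁻¹ * ‖f s‖ ^ 2)
      + ν * (∫ s in (1:ℝ)..T, Real.exp (2 * a * ν ^ ((1:ℝ)/3) * s) * γ s * ‖f s‖ ^ 2)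
      + ν ^ ((1:ℝ)/3) * (∫ s in (1:ℝ)..T, Real.exp (2 * a * ν ^ ((1:ℝ)/3) * s) * ‖f s‖ ^ 2)
      ≤ C * (‖f 1‖ ^ 2
        + |(k : ℝ)| * ((k : ℝ) ^ 2 + (l : ℝ) ^ 2) ^ (-(1:ℝ)/2) *
            (∫ s in (1:ℝ)..T, Real.exp (2 * a * ν ^ ((1:ℝ)/3) * s) * γ s * ‖f₁ s‖ ^ 2)
        + ν ^ (-(1:ℝ)/3) *
            (∫ s in (1:ℝ)..T, Real.exp (2 * a * ν ^ ((1:ℝ)/3) * s) * ‖f₂ s‖ ^ 2)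
        + ν⁻¹ *
            (∫ s in (1:ℝ)..T, Real.exp (2 * a * ν ^ ((1:ℝ)/3) * s) * (γ s)⁻¹ * ‖f₃ s‖ ^ 2)) := by
  refine ⟨132 * exp 39, by positivity, ?_⟩
  intro ν T a k l η f f₁ f₂ f₃ hν hν1 hT _ ha hk hf₁ hf₂ hf₃ γ hγ hf t ht
  rw [← dampingRate_eq_mul_rpow, neg_div, rpow_neg hν.le]
  set u := ν ^ ((1 : ℝ) / 3)
  have hu : 0 < u := rpow_pos_of_pos hν _
  have hu3 : u ^ 3 = ν := by rw [← rpow_natCast, ← rpow_mul hν.le]; norm_num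
  have hE₁ : exp (2 * a * u * 1) ≤ exp 8 :=
    exp_le_exp.2 (by nlinarith [rpow_le_one hν.le hν1.le (by norm_num : (0 : ℝ) ≤ 1 / 3)])
  have hk' : (k : ℝ) ≠ 0 := Int.cast_ne_zero.2 hk
  have hγ0 (s : ℝ) : 0 < γ s := by rw [hγ]; positivity
  have key := weighted_energy_estimate hu hu3 ha hk hγ hf₁ hf₂ hf₃ hf t ht
  set X := dampingRate k l * (∫ s in (1:ℝ)..T, exp (2 * a * u * s) * γ s * ‖f₁ s‖ ^ 2)
      + u⁻¹ * (∫ s in (1:ℝ)..T, exp (2 * a * u * s) * ‖f₂ s‖ ^ 2)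
      + ν⁻¹ * (∫ s in (1:ℝ)..T, exp (2 * a * u * s) * (γ s)⁻¹ * ‖f₃ s‖ ^ 2)
  have hX : 0 ≤ X := by
    have := dampingRate_pos (l : ℝ) hk'
    refine add_nonneg (add_nonneg (mul_nonneg this.le ?_) (mul_nonneg (by positivity) ?_))
      (mul_nonneg (by positivity) ?_) <;>
    exact integral_nonneg hT.le fun s _ => by have := hγ0 s; positivity
  calc _ ≤ _ := key
    _ ≤ 66 * exp 31 * (2 * exp 8 * (‖f 1‖ ^ 2 + X)) := by
      gcongr
      nlinarith [mul_le_mul_of_nonneg_right hE₁ (sq_nonneg ‖f 1‖),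
        one_le_exp (by norm_num : (0 : ℝ) ≤ 8)]
    _ = _ := by rw [show (39 : ℝ) = 31 + 8 by norm_num, exp_add]; ring
end

section
/- There exists a constant C > 0 such that for all f₁, f₂ in the class below with ∂_x f₁ = 0 and ∂_x f₂ = 0, the following hold: (i) sup_{(x,y,z)} |f₁(x,y,z)| ≤ C (‖f₁‖_{H¹} + ‖∂_z f₁‖_{H¹}); (ii) ‖f₁ f₂‖_{L²} ≤ C (‖f₁‖_{H¹} + ‖∂_z f₁‖_{H¹}) ‖f₂‖_{L²}; (iii) ‖f₁ f₂‖_{L²} ≤ C (‖f₁‖_{L²} + ‖∂_z f₁‖_{L²}) ‖f₂‖_{H¹}. The constant C is independent of f₁, f₂. -/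
/-!
For `x`-independent functions everything reduces to two one-dimensional Sobolev inequalities,
both from the fundamental theorem of calculus applied to `‖u‖²`, whose derivative
`2⟪u, u'⟫` is bounded by `‖u‖² + ‖u'‖²`: on the circle, `‖g z‖² ≤ 2 ∫₀¹ (‖g‖² + ‖g'‖²)`
(average over the starting point of a period), and on the line,
`‖u y‖² ≤ ∫ (‖u‖² + ‖u'‖²)` (start at `-∞`, where `‖u‖²` tends to `0` because it and its
derivative are integrable).

The circle inequality in `z` bounds `‖f₁(x,y,z)‖²` by `2 (m(f₁)(y) + m(∂_z f₁)(y))`,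
where `m(f)(y) = ∫₀¹ ‖f(x,y,z)‖² dz`; the line inequality in `y`, integrated in `z`, bounds
`m(f)(y)` by `‖f‖²_{L²} + ‖∂_y f‖²_{L²} ≤ ‖f‖²_{H¹}`. Together they give (i), and (ii)
follows from (i). For (iii), `‖f₁ f₂‖²_{L²} ≤ ∫ 2 (m(f₁) + m(∂_z f₁)) m(f₂) dy`, and `m(f₂)`
is bounded by `‖f₂‖²_{H¹}` while `m(f₁) + m(∂_z f₁)` integrates to
`‖f₁‖²_{L²} + ‖∂_z f₁‖²_{L²}`. All this works with `C = 2`.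
-/

open MeasureTheory

noncomputable section

/-- Partial derivative in the first variable `x`. -/
def pdx (f : ℝ → ℝ → ℝ → ℂ) : ℝ → ℝ → ℝ → ℂ :=
  fun x y z => deriv (fun x' => f x' y z) x

/-- Partial derivative in the second variable `y`. -/
def pdy (f : ℝ → ℝ → ℝ → ℂ) : ℝ → ℝ → ℝ → ℂ :=
  fun x y z => deriv (fun y' => f x y' z) y

/-- Partial derivative in the third variable `z`. -/
def pdz (f : ℝ → ℝ → ℝ → ℂ) : ℝ → ℝ → ℝ → ℂ :=
  fun x y z => deriv (fun z' => f x y z') z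

/-- Iterated partial derivative `∂^α` for a multi-index `α ∈ ℕ³`. -/
def pderiv3 (α : ℕ × ℕ × ℕ) (f : ℝ → ℝ → ℝ → ℂ) : ℝ → ℝ → ℝ → ℂ :=
  (pdx^[α.1]) ((pdy^[α.2.1]) ((pdz^[α.2.2]) f))

/-- Squared `L²` norm on `Ω = 𝕋 × ℝ × 𝕋` (with periods `1` in `x` and `z`):
`‖f‖_{L²}² = ∫₀¹∫_ℝ∫₀¹ |f(x,y,z)|² dx dy dz`. -/
def L2sq (f : ℝ → ℝ → ℝ → ℂ) : ℝ :=
  ∫ x in Set.Ioc (0:ℝ) 1, ∫ y : ℝ, ∫ z in Set.Ioc (0:ℝ) 1, ‖f x y z‖ ^ 2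

/-- `L²` norm on `Ω = 𝕋 × ℝ × 𝕋`. -/
def L2norm (f : ℝ → ℝ → ℝ → ℂ) : ℝ :=
  Real.sqrt (L2sq f)

/-- The multi-indices `α ∈ ℕ³` of order `|α| ≤ N`. -/
def multiIndicesLe (N : ℕ) : Finset (ℕ × ℕ × ℕ) :=
  (Finset.range (N+1) ×ˢ Finset.range (N+1) ×ˢ Finset.range (N+1)).filter
    fun α => α.1 + α.2.1 + α.2.2 ≤ N

/-- Squared `H^N` norm: `‖f‖_{H^N}² = Σ_{|α| ≤ N} ‖∂^α f‖_{L²}²`. -/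
def HNsq (N : ℕ) (f : ℝ → ℝ → ℝ → ℂ) : ℝ :=
  ∑ α ∈ multiIndicesLe N, L2sq (pderiv3 α f)

/-- `H^N` norm. -/
def HN (N : ℕ) (f : ℝ → ℝ → ℝ → ℂ) : ℝ :=
  Real.sqrt (HNsq N f)

/-- `L²` norm of the gradient: `‖∇f‖_{L²}² = ‖∂_x f‖² + ‖∂_y f‖² + ‖∂_z f‖²`. -/
def gradL2norm (f : ℝ → ℝ → ℝ → ℂ) : ℝ :=
  Real.sqrt (L2sq (pdx f) + L2sq (pdy f) + L2sq (pdz f))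

/-- The Laplacian `Δ = ∂_x² + ∂_y² + ∂_z²`. -/
def lap (f : ℝ → ℝ → ℝ → ℂ) : ℝ → ℝ → ℝ → ℂ :=
  pdx (pdx f) + pdy (pdy f) + pdz (pdz f)

/-- The operator `∂_x² + ∂_z²`. -/
def dxxzz (f : ℝ → ℝ → ℝ → ℂ) : ℝ → ℝ → ℝ → ℂ :=
  pdx (pdx f) + pdz (pdz f)

/-- The class of smooth functions `f : ℝ³ → ℂ` which are `1`-periodic in `x` and in `z`
and, together with all partial derivatives, decay faster than any polynomial as
`|y| → ∞`. -/
structure GoodFn (f : ℝ → ℝ → ℝ → ℂ) : Prop where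
  smooth : ContDiff ℝ (⊤ : ℕ∞) (fun p : ℝ × ℝ × ℝ => f p.1 p.2.1 p.2.2)
  per_x : ∀ x y z, f (x + 1) y z = f x y z
  per_z : ∀ x y z, f x y (z + 1) = f x y z
  decay : ∀ (α : ℕ × ℕ × ℕ) (n : ℕ), ∃ C : ℝ, ∀ x y z : ℝ,
    ‖pderiv3 α f x y z‖ * |y| ^ n ≤ C

open Set

section OneDimensional

variable {E : Type*} [NormedAddCommGroup E] [InnerProductSpace ℝ E]

lemma abs_two_mul_inner_le (a b : E) : |2 * inner ℝ a b| ≤ ‖a‖ ^ 2 + ‖b‖ ^ 2 := by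
  rw [abs_mul, abs_two]
  nlinarith [abs_real_inner_le_norm a b, two_mul_le_add_sq ‖a‖ ‖b‖]

lemma hasDerivAt_sq_norm {u : ℝ → E} (hu : ContDiff ℝ 1 u) (t : ℝ) :
    HasDerivAt (fun s => ‖u s‖ ^ 2) (2 * inner ℝ (u t) (deriv u t)) t :=
  ((hu.differentiable one_ne_zero t).hasDerivAt).norm_sq

lemma continuous_two_mul_inner_deriv {u : ℝ → E} (hu : ContDiff ℝ 1 u) :
    Continuous fun t => 2 * inner ℝ (u t) (deriv u t) :=
  continuous_const.mul (hu.continuous.inner (hu.continuous_deriv le_rfl))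

lemma Function.Periodic.deriv {g : ℝ → E} {c : ℝ} (hg : Function.Periodic g c) :
    Function.Periodic (deriv g) c := fun t => by
  rw [← deriv_comp_add_const, hg.funext]

lemma le_intervalIntegral_add_intervalIntegral_abs {φ φ' : ℝ → ℝ}
    (hφ : ∀ t, HasDerivAt φ (φ' t) t) (hφ' : Continuous φ') (b : ℝ) :
    φ b ≤ (∫ t in b - 1..b, φ t) + ∫ t in b - 1..b, |φ' t| := by
  have hφc : Continuous φ := continuous_iff_continuousAt.2 fun t => (hφ t).continuousAt
  have hle : b - 1 ≤ b := by linarith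
  set V := ∫ t in b - 1..b, |φ' t|
  have key : ∀ w ∈ Icc (b - 1) b, φ b ≤ φ w + V := fun w hw => by
    have hftc : ∫ t in w..b, φ' t = φ b - φ w :=
      intervalIntegral.integral_eq_sub_of_hasDerivAt (fun t _ => hφ t)
        (hφ'.intervalIntegrable _ _)
    have h1 : ∫ t in w..b, φ' t ≤ ∫ t in w..b, |φ' t| :=
      intervalIntegral.integral_mono_on hw.2 (hφ'.intervalIntegrable _ _)
        (hφ'.abs.intervalIntegrable _ _) fun t _ => le_abs_self _
    have h2 : ∫ t in w..b, |φ' t| ≤ V :=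
      intervalIntegral.integral_mono_interval hw.1 hw.2 le_rfl
        (ae_of_all _ fun t => abs_nonneg _) (hφ'.abs.intervalIntegrable _ _)
    linarith
  calc φ b = ∫ _ in b - 1..b, φ b := by simp
    _ ≤ ∫ w in b - 1..b, (φ w + V) :=
        intervalIntegral.integral_mono_on hle (by simp)
          ((hφc.add continuous_const).intervalIntegrable _ _) key
    _ = (∫ t in b - 1..b, φ t) + V := by
        rw [intervalIntegral.integral_add (hφc.intervalIntegrable _ _) intervalIntegrable_const]
        simp

theorem sq_norm_le_of_periodic {g : ℝ → E} (hg : ContDiff ℝ 1 g)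
    (hper : Function.Periodic g 1) (z : ℝ) :
    ‖g z‖ ^ 2 ≤ 2 * ∫ t in Ioc 0 1, (‖g t‖ ^ 2 + ‖deriv g t‖ ^ 2) := by
  have hgc := hg.continuous
  have hdc := hg.continuous_deriv le_rfl
  have hD := continuous_two_mul_inner_deriv hg
  have hφ : Continuous fun t => ‖g t‖ ^ 2 := by fun_prop
  have hE : Continuous fun t => 2 * (‖g t‖ ^ 2 + ‖deriv g t‖ ^ 2) := by fun_prop
  have hEper : Function.Periodic (fun t => 2 * (‖g t‖ ^ 2 + ‖deriv g t‖ ^ 2)) 1 := fun t => by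
    simp only [hper t, hper.deriv t]
  calc ‖g z‖ ^ 2
      ≤ (∫ t in z - 1..z, ‖g t‖ ^ 2) + ∫ t in z - 1..z, |2 * inner ℝ (g t) (deriv g t)| :=
        le_intervalIntegral_add_intervalIntegral_abs (hasDerivAt_sq_norm hg) hD z
    _ ≤ ∫ t in z - 1..z, 2 * (‖g t‖ ^ 2 + ‖deriv g t‖ ^ 2) := by
        rw [← intervalIntegral.integral_add (hφ.intervalIntegrable _ _)
          (hD.abs.intervalIntegrable _ _)]
        refine intervalIntegral.integral_mono_on (by linarith)
          ((hφ.add hD.abs).intervalIntegrable _ _) (hE.intervalIntegrable _ _) fun t _ => ?_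
        have := abs_two_mul_inner_le (g t) (deriv g t)
        nlinarith [sq_nonneg ‖deriv g t‖]
    _ = 2 * ∫ t in Ioc 0 1, (‖g t‖ ^ 2 + ‖deriv g t‖ ^ 2) := by
        have h := hEper.intervalIntegral_add_eq (z - 1) 0
        rw [sub_add_cancel, zero_add] at h
        rw [h, intervalIntegral.integral_of_le zero_le_one, integral_const_mul]

theorem sq_norm_le_integral {u : ℝ → E} (hu : ContDiff ℝ 1 u)
    (hint : Integrable fun t => ‖u t‖ ^ 2 + ‖deriv u t‖ ^ 2) (y : ℝ) :
    ‖u y‖ ^ 2 ≤ ∫ t, (‖u t‖ ^ 2 + ‖deriv u t‖ ^ 2) := by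
  have hφ'int : Integrable fun t => 2 * inner ℝ (u t) (deriv u t) :=
    hint.mono' (continuous_two_mul_inner_deriv hu).aestronglyMeasurable
      (ae_of_all _ fun t => abs_two_mul_inner_le _ _)
  have hφint : Integrable fun t => ‖u t‖ ^ 2 :=
    hint.mono' (hu.continuous.norm.pow 2).aestronglyMeasurable
      (ae_of_all _ fun t => by
        rw [Real.norm_eq_abs, abs_of_nonneg (by positivity)]
        exact le_add_of_nonneg_right (by positivity))
  have hlim := tendsto_zero_of_hasDerivAt_of_integrableOn_Iic (a := y)
    (fun t _ => hasDerivAt_sq_norm hu t) hφ'int.integrableOn hφint.integrableOn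
  calc ‖u y‖ ^ 2 = ∫ t in Iic y, 2 * inner ℝ (u t) (deriv u t) := by
        rw [integral_Iic_of_hasDerivAt_of_tendsto' (fun t _ => hasDerivAt_sq_norm hu t)
          hφ'int.integrableOn hlim, sub_zero]
    _ ≤ ∫ t in Iic y, (‖u t‖ ^ 2 + ‖deriv u t‖ ^ 2) :=
        setIntegral_mono hφ'int.integrableOn hint.integrableOn
          fun t => (le_abs_self _).trans (abs_two_mul_inner_le _ _)
    _ ≤ ∫ t, (‖u t‖ ^ 2 + ‖deriv u t‖ ^ 2) :=
        setIntegral_le_integral hint (ae_of_all _ fun t => by positivity)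

end OneDimensional

section Smoothness

open scoped ContDiff

def uncurry3 (f : ℝ → ℝ → ℝ → ℂ) : ℝ × ℝ × ℝ → ℂ := fun p => f p.1 p.2.1 p.2.2

variable {f : ℝ → ℝ → ℝ → ℂ} {n : WithTop ℕ∞}

lemma ContDiff.uncurry3_section_x (hf : ContDiff ℝ n (uncurry3 f)) (y z : ℝ) :
    ContDiff ℝ n fun x => f x y z :=
  hf.comp (contDiff_id.prodMk (contDiff_const.prodMk contDiff_const))

lemma ContDiff.uncurry3_section_y (hf : ContDiff ℝ n (uncurry3 f)) (x z : ℝ) :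
    ContDiff ℝ n fun y => f x y z :=
  hf.comp (contDiff_const.prodMk (contDiff_id.prodMk contDiff_const))

lemma ContDiff.uncurry3_section_z (hf : ContDiff ℝ n (uncurry3 f)) (x y : ℝ) :
    ContDiff ℝ n fun z => f x y z :=
  hf.comp (contDiff_const.prodMk (contDiff_const.prodMk contDiff_id))

lemma contDiff_uncurry3_pdy (hf : ContDiff ℝ ∞ (uncurry3 f)) :
    ContDiff ℝ ∞ (uncurry3 (pdy f)) := by
  obtain ⟨hd, hfd⟩ := contDiff_infty_iff_fderiv.1 hf
  have : uncurry3 (pdy f) = fun p => fderiv ℝ (uncurry3 f) p (0, 1, 0) := funext fun p => by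
    have hline : HasDerivAt (fun y => (p.1, y, p.2.2)) ((0 : ℝ), (1 : ℝ), (0 : ℝ)) p.2.1 :=
      (hasDerivAt_const _ _).prodMk ((hasDerivAt_id _).prodMk (hasDerivAt_const _ _))
    exact ((hd p).hasFDerivAt.comp_hasDerivAt p.2.1 hline).deriv
  rw [this]
  exact hfd.clm_apply contDiff_const

lemma contDiff_uncurry3_pdz (hf : ContDiff ℝ ∞ (uncurry3 f)) :
    ContDiff ℝ ∞ (uncurry3 (pdz f)) := by
  obtain ⟨hd, hfd⟩ := contDiff_infty_iff_fderiv.1 hf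
  have : uncurry3 (pdz f) = fun p => fderiv ℝ (uncurry3 f) p (0, 0, 1) := funext fun p => by
    have hline : HasDerivAt (fun z => (p.1, p.2.1, z)) ((0 : ℝ), (0 : ℝ), (1 : ℝ)) p.2.2 :=
      (hasDerivAt_const _ _).prodMk ((hasDerivAt_const _ _).prodMk (hasDerivAt_id _))
    exact ((hd p).hasFDerivAt.comp_hasDerivAt p.2.2 hline).deriv
  rw [this]
  exact hfd.clm_apply contDiff_const

end Smoothness

lemma pderiv3_pdz (α : ℕ × ℕ × ℕ) (f : ℝ → ℝ → ℝ → ℂ) :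
    pderiv3 α (pdz f) = pderiv3 (α.1, α.2.1, α.2.2 + 1) f := by
  simp only [pderiv3, Function.iterate_succ_apply]

theorem GoodFn.goodFn_pdz {f : ℝ → ℝ → ℝ → ℂ} (hf : GoodFn f) : GoodFn (pdz f) where
  smooth := contDiff_uncurry3_pdz hf.smooth
  per_x x y z := by simp only [_root_.pdz, hf.per_x]
  per_z x y z := Function.Periodic.deriv (fun z => hf.per_z x y z) z
  decay α n := by simpa only [pderiv3_pdz] using hf.decay (α.1, α.2.1, α.2.2 + 1) n

lemma GoodFn.continuous_uncurry3 {f : ℝ → ℝ → ℝ → ℂ} (hf : GoodFn f) :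
    Continuous (uncurry3 f) :=
  hf.smooth.continuous

lemma GoodFn.sq_norm_pderiv3_le {f : ℝ → ℝ → ℝ → ℂ} (hf : GoodFn f) (α : ℕ × ℕ × ℕ) :
    ∃ K : ℝ, ∀ x y z, ‖pderiv3 α f x y z‖ ^ 2 ≤ K * (1 + y ^ 2)⁻¹ := by
  obtain ⟨C₀, h₀⟩ := hf.decay α 0
  obtain ⟨C₁, h₁⟩ := hf.decay α 1
  refine ⟨C₀ ^ 2 + C₁ ^ 2, fun x y z => ?_⟩
  have e₀ := h₀ x y z
  have e₁ := h₁ x y z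
  simp only [pow_zero, mul_one, pow_one] at e₀ e₁
  have hn := norm_nonneg (pderiv3 α f x y z)
  rw [← div_eq_mul_inv, le_div_iff₀ (by positivity)]
  nlinarith [mul_self_le_mul_self hn e₀,
    mul_self_le_mul_self (mul_nonneg hn (abs_nonneg y)) e₁, sq_abs y]

def XIndependent (f : ℝ → ℝ → ℝ → ℂ) : Prop := ∀ x x', f x = f x'

section XIndependent

variable {f g : ℝ → ℝ → ℝ → ℂ}

lemma GoodFn.xIndependent (hf : GoodFn f) (hx : ∀ x y z, pdx f x y z = 0) : XIndependent f :=
  fun x x' => funext₂ fun y z => is_const_of_deriv_eq_zero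
    ((hf.smooth.uncurry3_section_x y z).differentiable (by simp)) (fun t => hx t y z) x x'

lemma XIndependent.pdy (h : XIndependent f) : XIndependent (pdy f) := fun x x' => by
  funext y z
  simp only [_root_.pdy, h x x']

lemma XIndependent.pdz (h : XIndependent f) : XIndependent (pdz f) := fun x x' => by
  funext y z
  simp only [_root_.pdz, h x x']

lemma XIndependent.mul (hf : XIndependent f) (hg : XIndependent g) :
    XIndependent fun x y z => f x y z * g x y z := fun x x' => by
  simp only [hf x x', hg x x']

end XIndependent

def circleL2sq (f : ℝ → ℝ → ℝ → ℂ) (x y : ℝ) : ℝ :=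
  ∫ z in Ioc (0 : ℝ) 1, ‖f x y z‖ ^ 2

section CircleL2sq

variable {f g : ℝ → ℝ → ℝ → ℂ}

lemma circleL2sq_nonneg (f : ℝ → ℝ → ℝ → ℂ) (x y : ℝ) : 0 ≤ circleL2sq f x y :=
  integral_nonneg fun _ => sq_nonneg _

lemma L2sq_nonneg (f : ℝ → ℝ → ℝ → ℂ) : 0 ≤ L2sq f :=
  integral_nonneg fun _ => integral_nonneg fun y => circleL2sq_nonneg f _ y

lemma L2sq_eq_integral_circleL2sq (h : XIndependent f) (x : ℝ) :
    L2sq f = ∫ y, circleL2sq f x y := by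
  calc L2sq f = ∫ _ in Ioc (0 : ℝ) 1, ∫ y, circleL2sq f x y :=
        setIntegral_congr_fun measurableSet_Ioc fun x' _ => by simp only [circleL2sq, h x' x]
    _ = ∫ y, circleL2sq f x y := by simp

lemma integrableOn_sq_norm_section (hf : Continuous (uncurry3 f)) (x y : ℝ) :
    IntegrableOn (fun z => ‖f x y z‖ ^ 2) (Ioc 0 1) :=
  ((hf.comp (continuous_const.prodMk (continuous_const.prodMk continuous_id))).norm.pow 2)
    |>.integrableOn_Ioc

lemma integrable_sq_norm_of_le {K : ℝ} (hf : Continuous (uncurry3 f))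
    (hK : ∀ x y z, ‖f x y z‖ ^ 2 ≤ K * (1 + y ^ 2)⁻¹) (x : ℝ) :
    Integrable (fun p : ℝ × ℝ => ‖f x p.1 p.2‖ ^ 2)
      (volume.prod (volume.restrict (Ioc (0 : ℝ) 1))) :=
  ((integrable_inv_one_add_sq.const_mul K).comp_fst _).mono'
    ((hf.comp (continuous_const.prodMk continuous_id)).norm.pow 2).aestronglyMeasurable
    (ae_of_all _ fun p => by simpa using hK x p.1 p.2)

lemma GoodFn.integrable_sq_norm (hf : GoodFn f) (x : ℝ) :
    Integrable (fun p : ℝ × ℝ => ‖f x p.1 p.2‖ ^ 2)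
      (volume.prod (volume.restrict (Ioc (0 : ℝ) 1))) :=
  have ⟨_, hK⟩ := hf.sq_norm_pderiv3_le 0
  integrable_sq_norm_of_le hf.continuous_uncurry3 hK x

lemma GoodFn.integrable_sq_norm_pdy (hf : GoodFn f) (x : ℝ) :
    Integrable (fun p : ℝ × ℝ => ‖pdy f x p.1 p.2‖ ^ 2)
      (volume.prod (volume.restrict (Ioc (0 : ℝ) 1))) :=
  have ⟨_, hK⟩ := hf.sq_norm_pderiv3_le (0, 1, 0)
  integrable_sq_norm_of_le (contDiff_uncurry3_pdy hf.smooth).continuous hK x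

lemma GoodFn.integrable_circleL2sq (hf : GoodFn f) (x : ℝ) : Integrable (circleL2sq f x) :=
  (hf.integrable_sq_norm x).integral_prod_left

theorem GoodFn.circleL2sq_le_integral (hf : GoodFn f) (x y₀ : ℝ) :
    circleL2sq f x y₀ ≤ (∫ y, circleL2sq f x y) + ∫ y, circleL2sq (pdy f) x y := by
  have hpdy := (contDiff_uncurry3_pdy hf.smooth).continuous
  have hE := (hf.integrable_sq_norm x).add (hf.integrable_sq_norm_pdy x)
  calc circleL2sq f x y₀
      ≤ ∫ z in Ioc 0 1, ∫ y, (‖f x y z‖ ^ 2 + ‖pdy f x y z‖ ^ 2) := by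
        refine integral_mono_ae (integrableOn_sq_norm_section hf.continuous_uncurry3 x y₀)
          hE.integral_prod_right ?_
        filter_upwards [hE.prod_left_ae] with z hz
        exact sq_norm_le_integral ((hf.smooth.uncurry3_section_y x z).of_le (by simp)) hz y₀
    _ = ∫ y, ∫ z in Ioc 0 1, (‖f x y z‖ ^ 2 + ‖pdy f x y z‖ ^ 2) :=
        (integral_integral_swap hE).symm
    _ = ∫ y, (circleL2sq f x y + circleL2sq (pdy f) x y) :=
        integral_congr_ae (ae_of_all _ fun y => integral_add
          (integrableOn_sq_norm_section hf.continuous_uncurry3 x y)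
          (integrableOn_sq_norm_section hpdy x y))
    _ = (∫ y, circleL2sq f x y) + ∫ y, circleL2sq (pdy f) x y :=
        integral_add (hf.integrable_circleL2sq x) (hf.integrable_sq_norm_pdy x).integral_prod_left

theorem GoodFn.sq_norm_le_circleL2sq (hf : GoodFn f) (x y z : ℝ) :
    ‖f x y z‖ ^ 2 ≤ 2 * (circleL2sq f x y + circleL2sq (pdz f) x y) := by
  have h : ‖f x y z‖ ^ 2 ≤ 2 * ∫ t in Ioc 0 1, (‖f x y t‖ ^ 2 + ‖pdz f x y t‖ ^ 2) :=
    sq_norm_le_of_periodic ((hf.smooth.uncurry3_section_z x y).of_le (by simp))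
      (fun z => hf.per_z x y z) z
  rwa [integral_add (integrableOn_sq_norm_section hf.continuous_uncurry3 x y)
    (integrableOn_sq_norm_section hf.goodFn_pdz.continuous_uncurry3 x y)] at h

end CircleL2sq

lemma L2sq_add_L2sq_pdy_le_sq_HN_one (f : ℝ → ℝ → ℝ → ℂ) :
    L2sq f + L2sq (pdy f) ≤ HN 1 f ^ 2 := by
  rw [HN, HNsq, Real.sq_sqrt (Finset.sum_nonneg fun α _ => L2sq_nonneg _)]
  calc L2sq f + L2sq (pdy f) = ∑ α ∈ {(0, 0, 0), (0, 1, 0)}, L2sq (pderiv3 α f) :=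
        (Finset.sum_pair (f := fun α => L2sq (pderiv3 α f)) (a := (0, 0, 0)) (b := (0, 1, 0))
          (by decide)).symm
    _ ≤ ∑ α ∈ multiIndicesLe 1, L2sq (pderiv3 α f) :=
        Finset.sum_le_sum_of_subset_of_nonneg (by decide) fun α _ _ => L2sq_nonneg _

section Products

variable {f g : ℝ → ℝ → ℝ → ℂ}

theorem GoodFn.circleL2sq_le_sq_HN_one (hf : GoodFn f) (h : XIndependent f) (x y : ℝ) :
    circleL2sq f x y ≤ HN 1 f ^ 2 := by
  have := hf.circleL2sq_le_integral x y
  rw [← L2sq_eq_integral_circleL2sq h x, ← L2sq_eq_integral_circleL2sq h.pdy x] at this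
  exact this.trans (L2sq_add_L2sq_pdy_le_sq_HN_one f)

theorem GoodFn.sq_norm_le_sq_HN_one (hf : GoodFn f) (h : XIndependent f) (x y z : ℝ) :
    ‖f x y z‖ ^ 2 ≤ 2 * (HN 1 f ^ 2 + HN 1 (pdz f) ^ 2) := by
  refine (hf.sq_norm_le_circleL2sq x y z).trans ?_
  gcongr
  · exact hf.circleL2sq_le_sq_HN_one h x y
  · exact hf.goodFn_pdz.circleL2sq_le_sq_HN_one h.pdz x y

lemma circleL2sq_mul_le {B x y : ℝ} (hg : Continuous (uncurry3 g))
    (hB : ∀ z, ‖f x y z‖ ^ 2 ≤ B) :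
    circleL2sq (fun x y z => f x y z * g x y z) x y ≤ B * circleL2sq g x y := by
  rw [circleL2sq, circleL2sq, ← integral_const_mul]
  refine integral_mono_of_nonneg (ae_of_all _ fun z => sq_nonneg _)
    ((integrableOn_sq_norm_section hg x y).const_mul B) (ae_of_all _ fun z => ?_)
  simp only [norm_mul, mul_pow]
  exact mul_le_mul_of_nonneg_right (hB z) (sq_nonneg _)

lemma L2sq_le_integral_of_circleL2sq_le (h : XIndependent f) {G : ℝ → ℝ} (hG : Integrable G)
    (hle : ∀ y, circleL2sq f 0 y ≤ G y) : L2sq f ≤ ∫ y, G y := by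
  rw [L2sq_eq_integral_circleL2sq h 0]
  exact integral_mono_of_nonneg (ae_of_all _ (circleL2sq_nonneg f 0)) hG (ae_of_all _ hle)

theorem GoodFn.L2sq_mul_le_of_sq_norm_le {B : ℝ} (hg : GoodFn g) (hf₀ : XIndependent f)
    (hg₀ : XIndependent g) (hB : ∀ x y z, ‖f x y z‖ ^ 2 ≤ B) :
    L2sq (fun x y z => f x y z * g x y z) ≤ B * L2sq g := by
  calc L2sq (fun x y z => f x y z * g x y z) ≤ ∫ y, B * circleL2sq g 0 y :=
        L2sq_le_integral_of_circleL2sq_le (hf₀.mul hg₀)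
          ((hg.integrable_circleL2sq 0).const_mul B) fun y =>
            circleL2sq_mul_le hg.continuous_uncurry3 (hB 0 y)
    _ = B * L2sq g := by rw [integral_const_mul, L2sq_eq_integral_circleL2sq hg₀ 0]

theorem GoodFn.L2sq_mul_le (hf : GoodFn f) (hg : GoodFn g) (hf₀ : XIndependent f)
    (hg₀ : XIndependent g) :
    L2sq (fun x y z => f x y z * g x y z) ≤ 2 * (L2sq f + L2sq (pdz f)) * HN 1 g ^ 2 := by
  have hc := hf.integrable_circleL2sq 0
  have hc' := hf.goodFn_pdz.integrable_circleL2sq 0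
  calc L2sq (fun x y z => f x y z * g x y z)
      ≤ ∫ y, 2 * (circleL2sq f 0 y + circleL2sq (pdz f) 0 y) * HN 1 g ^ 2 := by
        refine L2sq_le_integral_of_circleL2sq_le (hf₀.mul hg₀)
          (((hc.add hc').const_mul 2).mul_const _) fun y =>
            (circleL2sq_mul_le hg.continuous_uncurry3 (hf.sq_norm_le_circleL2sq 0 y)).trans ?_
        have := circleL2sq_nonneg f 0 y
        have := circleL2sq_nonneg (pdz f) 0 y
        gcongr
        exact hg.circleL2sq_le_sq_HN_one hg₀ 0 y
    _ = 2 * (L2sq f + L2sq (pdz f)) * HN 1 g ^ 2 := by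
        rw [integral_mul_const, integral_const_mul, integral_add hc hc',
          ← L2sq_eq_integral_circleL2sq hf₀ 0, ← L2sq_eq_integral_circleL2sq hf₀.pdz 0]

end Products

lemma two_mul_sq_add_sq_le {a b : ℝ} (ha : 0 ≤ a) (hb : 0 ≤ b) :
    2 * (a ^ 2 + b ^ 2) ≤ (2 * (a + b)) ^ 2 := by
  nlinarith [mul_nonneg ha hb]

/-- Anisotropic estimates for `x`-independent functions: if `∂_x f₁ = ∂_x f₂ = 0`, then
(i) `‖f₁‖_{L^∞} ≤ C(‖f₁‖_{H¹} + ‖∂_z f₁‖_{H¹})`;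
(ii) `‖f₁ f₂‖_{L²} ≤ C(‖f₁‖_{H¹} + ‖∂_z f₁‖_{H¹})‖f₂‖_{L²}`;
(iii) `‖f₁ f₂‖_{L²} ≤ C(‖f₁‖_{L²} + ‖∂_z f₁‖_{L²})‖f₂‖_{H¹}`. -/
theorem stmt13 : ∃ C : ℝ, 0 < C ∧ ∀ f₁ f₂ : ℝ → ℝ → ℝ → ℂ,
    GoodFn f₁ → GoodFn f₂ →
    (∀ x y z, pdx f₁ x y z = 0) → (∀ x y z, pdx f₂ x y z = 0) →
    (∀ x y z, ‖f₁ x y z‖ ≤ C * (HN 1 f₁ + HN 1 (pdz f₁))) ∧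
    L2norm (fun x y z => f₁ x y z * f₂ x y z)
      ≤ C * (HN 1 f₁ + HN 1 (pdz f₁)) * L2norm f₂ ∧
    L2norm (fun x y z => f₁ x y z * f₂ x y z)
      ≤ C * (L2norm f₁ + L2norm (pdz f₁)) * HN 1 f₂ := by
  refine ⟨2, two_pos, fun f₁ f₂ hf₁ hf₂ hx₁ hx₂ => ?_⟩
  have h₁ := hf₁.xIndependent hx₁
  have h₂ := hf₂.xIndependent hx₂
  have ha : 0 ≤ HN 1 f₁ := Real.sqrt_nonneg _
  have hb : 0 ≤ HN 1 (pdz f₁) := Real.sqrt_nonneg _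
  have hsup x y z := (hf₁.sq_norm_le_sq_HN_one h₁ x y z).trans (two_mul_sq_add_sq_le ha hb)
  have hL : 0 ≤ L2norm f₂ := Real.sqrt_nonneg _
  have hH : 0 ≤ HN 1 f₂ := Real.sqrt_nonneg _
  have hp : 0 ≤ L2norm f₁ := Real.sqrt_nonneg _
  have hq : 0 ≤ L2norm (pdz f₁) := Real.sqrt_nonneg _
  refine ⟨fun x y z => ?_, ?_, ?_⟩
  · exact (pow_le_pow_iff_left₀ (norm_nonneg _) (by positivity) two_ne_zero).1 (hsup x y z)
  · refine Real.sqrt_le_iff.2 ⟨by positivity, ?_⟩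
    rw [mul_pow, L2norm, Real.sq_sqrt (L2sq_nonneg f₂)]
    exact hf₂.L2sq_mul_le_of_sq_norm_le h₁ h₂ hsup
  · refine Real.sqrt_le_iff.2 ⟨by positivity, ?_⟩
    calc L2sq (fun x y z => f₁ x y z * f₂ x y z)
        ≤ 2 * (L2norm f₁ ^ 2 + L2norm (pdz f₁) ^ 2) * HN 1 f₂ ^ 2 := by
          rw [L2norm, L2norm, Real.sq_sqrt (L2sq_nonneg _), Real.sq_sqrt (L2sq_nonneg _)]
          exact hf₁.L2sq_mul_le hf₂ h₁ h₂
      _ ≤ (2 * (L2norm f₁ + L2norm (pdz f₁)) * HN 1 f₂) ^ 2 := by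
          rw [mul_pow _ (HN 1 f₂)]
          gcongr
          exact two_mul_sq_add_sq_le hp hq

end
end
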